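/- arXiv:1412.7798 — 6 statements merged into one kernel-verified Lean document; each statement's English description precedes it below -/
import Mathlib

section
/- Let n, k, t be positive integers with 2 ≤ t ≤ n - 1 and C(n-t,2) + t(n-t-1) + 1 ≤ k ≤ C(n-t,2) + t(n-t) - 1. Then g(n,k) = k + t - 1; that is, every connected graph on n vertices with at most k + t - 1 edges satisfies mc(G) ≤ k, and there exists a connected graph on n vertices with k + t edges and mc(G) > k. -/
/-- An edge-coloring `c` of a graph `G` is a *monochromatic connection coloring*
(MC-coloring) if any two vertices are joined by a path all of whose edges
receive the same color. -/
def IsMCColoring {V : Type*} (G : SimpleGraph V) (c : Sym2 V → ℕ) : Prop :=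
  ∀ u v : V, ∃ p : G.Walk u v, p.IsPath ∧ ∃ k : ℕ, ∀ e ∈ p.edges, c e = k

/-- The *monochromatic connection number* `mc(G)`: the maximum number of colors
used in an MC-coloring of `G`. -/
noncomputable def mcNumber {V : Type*} (G : SimpleGraph V) : ℕ :=
  sSup {k | ∃ c : Sym2 V → ℕ, IsMCColoring G c ∧ (c '' G.edgeSet).ncard = k}


open Finset

lemma choose_two_add (a b : ℕ) : (a + b).choose 2 = a.choose 2 + b.choose 2 + a * b := by
  induction b with
  | zero => simp
  | succ b ih =>
    have h1 : a + (b + 1) = (a + b) + 1 := by ring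
    rw [h1, Nat.choose_succ_succ (a + b) 1, Nat.choose_succ_succ b 1]
    simp only [Nat.choose_one_right, show Nat.succ 1 = 2 from rfl]
    have hr : a * (b + 1) = a * b + a := by ring
    omega

lemma choose_two_succ (x : ℕ) : (x + 1).choose 2 = x.choose 2 + x := by
  have := choose_two_add x 1
  simpa using this

lemma sum_choose_two_le' {ι : Type*} (s : Finset ι) (f : ι → ℕ) :
    ∑ i ∈ s, (f i).choose 2 ≤ (∑ i ∈ s, f i).choose 2 := by
  induction s using Finset.cons_induction with
  | empty => simp
  | cons a s ha ih =>
    rw [Finset.sum_cons, Finset.sum_cons, choose_two_add]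
    omega

lemma sum_choose_two_le {ι : Type*} (s : Finset ι) (f : ι → ℕ) (hf : ∀ i ∈ s, 1 ≤ f i) :
    ∑ i ∈ s, (f i).choose 2 ≤ ((∑ i ∈ s, (f i - 1)) + 1).choose 2 := by
  induction s using Finset.cons_induction with
  | empty => simp
  | cons a s ha ih =>
    have hfa : 1 ≤ f a := hf a (Finset.mem_cons_self a s)
    have ih' := ih (fun i hi => hf i (Finset.mem_cons_of_mem hi))
    rw [Finset.sum_cons, Finset.sum_cons]
    set S := ∑ i ∈ s, (f i - 1) with hS
    set x := f a - 1 with hx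
    have hfa' : f a = x + 1 := by omega
    have key : (x + (S + 1)).choose 2 = x.choose 2 + (S + 1).choose 2 + x * (S + 1) :=
      choose_two_add x (S + 1)
    have hxle : x ≤ x * (S + 1) := Nat.le_mul_of_pos_right x (Nat.succ_pos S)
    calc (f a).choose 2 + ∑ i ∈ s, (f i).choose 2
        = x.choose 2 + x + ∑ i ∈ s, (f i).choose 2 := by rw [hfa', choose_two_succ]
      _ ≤ x.choose 2 + x + (S + 1).choose 2 := by omega
      _ ≤ (x + (S + 1)).choose 2 := by omega
      _ = (x + S + 1).choose 2 := by ring_nf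


open Finset

lemma card_sym2_not_diag {α : Type*} [DecidableEq α] (s : Finset α) :
    (s.sym2.filter (fun e => ¬ e.IsDiag)).card = s.card.choose 2 := by
  have h1 : s.sym2.card = (s.card + 1).choose 2 := Finset.card_sym2 s
  have hsplit := Finset.card_filter_add_card_filter_not
    (s := s.sym2) (p := fun e => e.IsDiag)
  have hdiag : (s.sym2.filter (fun e => e.IsDiag)) = s.diag.image (Function.uncurry Sym2.mk) := by
    rw [Finset.sym2_eq_image, Sym2.filter_image_mk_isDiag]
  have hdcard : (s.sym2.filter (fun e => e.IsDiag)).card = s.card := by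
    rw [hdiag]
    rw [Finset.card_image_of_injOn]
    · exact Finset.diag_card s
    · intro a ha b hb hab
      rw [Finset.mem_coe, Finset.mem_diag] at ha hb
      obtain ⟨a1, a2⟩ := a
      obtain ⟨b1, b2⟩ := b
      obtain ⟨_, ha2⟩ := ha
      obtain ⟨_, hb2⟩ := hb
      simp only at ha2 hb2
      subst ha2; subst hb2
      have := Sym2.eq_iff.mp hab
      aesop
  have h2 : (s.card + 1).choose 2 = s.card.choose 2 + s.card := by
    have := choose_two_add s.card 1
    simpa using this
  omega


open Finset

lemma reach_step {V : Type*} (H : SimpleGraph V) {v r : V} (h : H.Reachable v r) (hne : v ≠ r) :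
    ∃ w, H.Adj v w ∧ H.Reachable w r ∧ H.dist w r < H.dist v r := by
  obtain ⟨p, hp⟩ := h.exists_walk_length_eq_dist
  cases p with
  | nil => exact absurd rfl hne
  | cons hadj q =>
    refine ⟨_, hadj, ⟨q⟩, ?_⟩
    have h1 : H.dist _ r ≤ q.length := SimpleGraph.dist_le q
    simp only [SimpleGraph.Walk.length_cons] at hp
    omega

lemma card_reach_le {n : ℕ} (H : SimpleGraph (Fin n)) (r : Fin n) :
    ∀ (A : Finset (Fin n)) (EA : Finset (Sym2 (Fin n))),
    (∀ v, v ∈ A ↔ H.Reachable v r) →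
    (∀ e, e ∈ EA ↔ e ∈ H.edgeSet ∧ ∀ x ∈ e, H.Reachable x r) →
    A.card ≤ EA.card + 1 := by
  intro A EA hA hEA
  classical
  have hrA : r ∈ A := (hA r).mpr (SimpleGraph.Reachable.refl r)
  have hstep : ∀ v ∈ A.erase r, ∃ w, H.Adj v w ∧ H.Reachable w r ∧ H.dist w r < H.dist v r := by
    intro v hv
    have hvr : v ≠ r := Finset.ne_of_mem_erase hv
    exact reach_step H ((hA v).mp (Finset.mem_of_mem_erase hv)) hvr
  choose g hg1 hg2 hg3 using hstep
  have hcard : (A.erase r).card ≤ EA.card := by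
    apply Finset.card_le_card_of_injOn
      (fun v => if h : v ∈ A.erase r then s(v, g v h) else s(v, v))
    · intro v hv
      simp only [dif_pos (Finset.mem_coe.mp hv)]
      rw [Finset.mem_coe, hEA]
      refine ⟨hg1 v hv, ?_⟩
      intro x hx
      rw [Sym2.mem_iff] at hx
      rcases hx with h | h
      · subst h; exact (hA x).mp (Finset.mem_of_mem_erase hv)
      · subst h; exact hg2 v hv
    · intro v1 hv1 v2 hv2 heq
      simp only [Finset.mem_coe] at hv1 hv2
      simp only [dif_pos hv1, dif_pos hv2, Sym2.eq_iff] at heq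
      rcases heq with ⟨h1, h2⟩ | ⟨h1, h2⟩
      · exact h1
      · exfalso
        have d1 := hg3 v1 hv1
        have d2 := hg3 v2 hv2
        rw [← h1] at d2
        rw [h2] at d1
        omega
  have h1 : 0 < A.card := Finset.card_pos.mpr ⟨r, hrA⟩
  have h2 : (A.erase r).card = A.card - 1 := Finset.card_erase_of_mem hrA
  omega

lemma nonedge_reach_bound {n : ℕ} (G H : SimpleGraph (Fin n)) (hle : H ≤ G)
    (NEf EHf : Finset (Sym2 (Fin n)))
    (hNEf : ∀ e, e ∈ NEf ↔ (¬ e.IsDiag ∧ e ∉ G.edgeSet ∧ ∃ u v, e = s(u, v) ∧ H.Reachable u v))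
    (hEHf : ∀ e, e ∈ EHf ↔ e ∈ H.edgeSet) :
    NEf.card ≤ (EHf.card).choose 2 := by
  classical
  have hne : ∀ v : Fin n, ((univ : Finset (Fin n)).filter (fun u => H.Reachable v u)).Nonempty :=
    fun v => ⟨v, Finset.mem_filter.mpr ⟨Finset.mem_univ v, SimpleGraph.Reachable.refl v⟩⟩
  set rep : Fin n → Fin n :=
    fun v => ((univ : Finset (Fin n)).filter (fun u => H.Reachable v u)).min' (hne v) with hrep
  have hrep_reach : ∀ v, H.Reachable v (rep v) := by
    intro v
    have := Finset.min'_mem _ (hne v)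
    rw [Finset.mem_filter] at this
    exact this.2
  have hrep_eq : ∀ u v, H.Reachable u v → rep u = rep v := by
    intro u v huv
    apply le_antisymm
    · apply Finset.min'_le
      rw [Finset.mem_filter]
      exact ⟨Finset.mem_univ _, huv.trans (hrep_reach v)⟩
    · apply Finset.min'_le
      rw [Finset.mem_filter]
      exact ⟨Finset.mem_univ _, huv.symm.trans (hrep_reach u)⟩
  set R : Finset (Fin n) := (univ : Finset (Fin n)).image rep with hR
  have hrep_idem : ∀ r ∈ R, rep r = r := by
    intro r hr
    rw [hR, Finset.mem_image] at hr
    obtain ⟨a, -, rfl⟩ := hr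
    exact (hrep_eq a (rep a) (hrep_reach a)).symm
  set f : Sym2 (Fin n) → Fin n := fun e => rep (Quot.out e).1 with hf
  have hf_mem : ∀ e ∈ NEf, f e ∈ R := fun e _ => Finset.mem_image_of_mem rep (Finset.mem_univ _)
  have hfib := Finset.card_eq_sum_card_fiberwise hf_mem
  set A : Fin n → Finset (Fin n) :=
    fun r => (univ : Finset (Fin n)).filter (fun v => H.Reachable v r) with hA
  set EH : Fin n → Finset (Sym2 (Fin n)) :=
    fun r => EHf.filter (fun e => ∀ x ∈ e, H.Reachable x r) with hEH
  set NEr : Fin n → Finset (Sym2 (Fin n)) :=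
    fun r => NEf.filter (fun e => ∀ x ∈ e, H.Reachable x r) with hNEr
  have claim1 : ∀ r ∈ R, NEf.filter (fun e => f e = r) ⊆ NEr r := by
    intro r hr e he
    rw [Finset.mem_filter] at he
    obtain ⟨heNE, hfe⟩ := he
    obtain ⟨hd, hnG, u, v, rfl, huv⟩ := (hNEf _).mp heNE
    have hfu : f s(u, v) = rep u := by
      show rep (Quot.out (s(u, v) : Sym2 (Fin n))).1 = rep u
      rcases Sym2.mem_iff.mp (Sym2.out_fst_mem (s(u, v) : Sym2 (Fin n))) with h | h
      · rw [h]
      · rw [h]; exact (hrep_eq u v huv).symm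
    have hrepu : rep u = r := by rw [← hfu]; exact hfe
    have hrepv : rep v = r := by rw [← hrep_eq u v huv]; exact hrepu
    rw [hNEr, Finset.mem_filter]
    refine ⟨heNE, ?_⟩
    intro x hx
    rw [Sym2.mem_iff] at hx
    rcases hx with rfl | rfl
    · rw [← hrepu]; exact hrep_reach x
    · rw [← hrepv]; exact hrep_reach x
  have claim3 : ∀ r, (A r).card ≤ (EH r).card + 1 := by
    intro r
    refine card_reach_le H r (A r) (EH r) ?_ ?_
    · intro v
      rw [hA]
      simp only [Finset.mem_filter, Finset.mem_univ, true_and]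
    · intro e
      rw [hEH, Finset.mem_filter, hEHf]
  have claim2 : ∀ r, (NEr r).card + (EH r).card ≤ ((A r).card).choose 2 := by
    intro r
    have hdisj : Disjoint (NEr r) (EH r) := by
      rw [Finset.disjoint_left]
      intro e he1 he2
      rw [hNEr, Finset.mem_filter] at he1
      rw [hEH, Finset.mem_filter, hEHf] at he2
      exact ((hNEf _).mp he1.1).2.1 (SimpleGraph.edgeSet_mono hle he2.1)
    have hsub : NEr r ∪ EH r ⊆ ((A r).sym2).filter (fun e => ¬ e.IsDiag) := by
      intro e he
      rw [Finset.mem_union] at he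
      rw [Finset.mem_filter, Finset.mem_sym2_iff]
      rcases he with he | he
      · rw [hNEr, Finset.mem_filter] at he
        have h1 := (hNEf _).mp he.1
        refine ⟨fun a ha => ?_, h1.1⟩
        rw [hA]; simp only [Finset.mem_filter, Finset.mem_univ, true_and]
        exact he.2 a ha
      · rw [hEH, Finset.mem_filter, hEHf] at he
        refine ⟨fun a ha => ?_, H.not_isDiag_of_mem_edgeSet he.1⟩
        rw [hA]; simp only [Finset.mem_filter, Finset.mem_univ, true_and]
        exact he.2 a ha
    calc (NEr r).card + (EH r).card = (NEr r ∪ EH r).card :=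
          (Finset.card_union_of_disjoint hdisj).symm
      _ ≤ (((A r).sym2).filter (fun e => ¬ e.IsDiag)).card := Finset.card_le_card hsub
      _ = ((A r).card).choose 2 := card_sym2_not_diag _
  have claim4 : ∀ r, (NEr r).card ≤ ((EH r).card).choose 2 := by
    intro r
    have h2 := claim2 r
    have h3 := claim3 r
    have h4 : ((A r).card).choose 2 ≤ ((EH r).card + 1).choose 2 := Nat.choose_le_choose 2 h3
    rw [choose_two_succ] at h4
    omega
  have claim5 : ∑ r ∈ R, (EH r).card ≤ EHf.card := by
    rw [← Finset.card_biUnion]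
    · apply Finset.card_le_card
      intro e he
      rw [Finset.mem_biUnion] at he
      obtain ⟨r, -, he⟩ := he
      rw [hEH] at he
      exact Finset.mem_of_mem_filter _ he
    · intro r1 h1 r2 h2 hne12
      rw [Function.onFun, Finset.disjoint_left]
      intro e he1 he2
      rw [hEH, Finset.mem_filter] at he1 he2
      have hout : (Quot.out e).1 ∈ e := Sym2.out_fst_mem _
      have e1 : rep (Quot.out e).1 = r1 := by
        rw [hrep_eq _ _ (he1.2 _ hout), hrep_idem r1 h1]
      have e2 : rep (Quot.out e).1 = r2 := by
        rw [hrep_eq _ _ (he2.2 _ hout), hrep_idem r2 h2]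
      exact hne12 (e1 ▸ e2)
  calc NEf.card = ∑ r ∈ R, (NEf.filter (fun e => f e = r)).card := hfib
    _ ≤ ∑ r ∈ R, (NEr r).card :=
        Finset.sum_le_sum (fun r hr => Finset.card_le_card (claim1 r hr))
    _ ≤ ∑ r ∈ R, ((EH r).card).choose 2 := Finset.sum_le_sum (fun r _ => claim4 r)
    _ ≤ (∑ r ∈ R, (EH r).card).choose 2 := sum_choose_two_le' _ _
    _ ≤ (EHf.card).choose 2 := Nat.choose_le_choose 2 claim5

lemma key1 {n : ℕ} (G : SimpleGraph (Fin n)) (c : Sym2 (Fin n) → ℕ) (hc : IsMCColoring G c) :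
    n.choose 2 ≤ G.edgeSet.ncard + (G.edgeSet.ncard + 1 - (c '' G.edgeSet).ncard).choose 2 := by
  classical
  set E : Finset (Sym2 (Fin n)) := (Set.toFinite G.edgeSet).toFinset with hE
  have hEmem : ∀ e, e ∈ E ↔ e ∈ G.edgeSet := fun e => Set.Finite.mem_toFinset _
  have hm : G.edgeSet.ncard = E.card := Set.ncard_eq_toFinset_card G.edgeSet (Set.toFinite _)
  set CF := E.image c with hCF
  have hN : (c '' G.edgeSet).ncard = CF.card := by
    rw [hCF, ← Set.ncard_coe_finset, Finset.coe_image, Set.Finite.coe_toFinset]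
  set H : ℕ → SimpleGraph (Fin n) := fun j =>
    { Adj := fun u v => G.Adj u v ∧ c s(u, v) = j,
      symm := by
        constructor
        intro u v h
        refine ⟨h.1.symm, ?_⟩
        rw [Sym2.eq_swap]
        exact h.2,
      loopless := ⟨fun v h => G.loopless.irrefl v h.1⟩ } with hH
  have hHle : ∀ j, H j ≤ G := fun j u v h => h.1
  have hHedge : ∀ j e, e ∈ (H j).edgeSet ↔ e ∈ G.edgeSet ∧ c e = j := by
    intro j e
    induction e using Sym2.ind with
    | _ u v => exact Iff.rfl
  set EHf : ℕ → Finset (Sym2 (Fin n)) := fun j => E.filter (fun e => c e = j) with hEHfdef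
  have hEHfc : ∀ j e, e ∈ EHf j ↔ e ∈ (H j).edgeSet := by
    intro j e
    rw [hEHfdef]
    simp only [Finset.mem_filter, hEmem, hHedge]
  set NEa : Finset (Sym2 (Fin n)) :=
    (Set.toFinite ((⊤ : SimpleGraph (Fin n)).edgeSet \ G.edgeSet)).toFinset with hNEa
  have hNEmem : ∀ e, e ∈ NEa ↔ ¬ e.IsDiag ∧ e ∉ G.edgeSet := by
    intro e
    rw [hNEa, Set.Finite.mem_toFinset, Set.mem_diff, SimpleGraph.edgeSet_top]
    exact Iff.rfl
  have hPE : NEa.card + E.card = n.choose 2 := by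
    have h1 : NEa ∪ E = (⊤ : SimpleGraph (Fin n)).edgeFinset := by
      ext e
      rw [Finset.mem_union, hNEmem, hEmem, SimpleGraph.mem_edgeFinset]
      have htop : e ∈ (⊤ : SimpleGraph (Fin n)).edgeSet ↔ ¬ e.IsDiag := by
        rw [SimpleGraph.edgeSet_top]; exact Iff.rfl
      rw [htop]
      constructor
      · rintro (⟨h1, h2⟩ | h1)
        · exact h1
        · exact G.not_isDiag_of_mem_edgeSet h1
      · intro hd
        by_cases hG : e ∈ G.edgeSet
        · exact Or.inr hG
        · exact Or.inl ⟨hd, hG⟩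
    have hdisj : Disjoint NEa E := by
      rw [Finset.disjoint_left]
      intro e he1 he2
      exact ((hNEmem e).mp he1).2 ((hEmem e).mp he2)
    rw [← Finset.card_union_of_disjoint hdisj, h1,
      SimpleGraph.card_edgeFinset_top_eq_card_choose_two, Fintype.card_fin]
  set NEj : ℕ → Finset (Sym2 (Fin n)) :=
    fun j => NEa.filter (fun e => ∃ u v, e = s(u, v) ∧ (H j).Reachable u v) with hNEjdef
  have hNEj : ∀ j e, e ∈ NEj j ↔
      (¬ e.IsDiag ∧ e ∉ G.edgeSet ∧ ∃ u v, e = s(u, v) ∧ (H j).Reachable u v) := by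
    intro j e
    rw [hNEjdef]
    simp only [Finset.mem_filter, hNEmem]
    tauto
  have hcover : NEa ⊆ CF.biUnion NEj := by
    intro e he
    induction e using Sym2.ind with
    | _ u v =>
      obtain ⟨hd, hnG⟩ := (hNEmem _).mp he
      obtain ⟨p, hp, j, hj⟩ := hc u v
      have hreach : (H j).Reachable u v := by
        refine ⟨p.transfer (H j) ?_⟩
        intro e' he'
        rw [hHedge]
        exact ⟨p.edges_subset_edgeSet he', hj e' he'⟩
      have hjCF : j ∈ CF := by
        cases p with
        | nil => exact absurd (by simp) hd
        | cons hadj q =>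
          rename_i w
          have hfe : s(u, w) ∈ (SimpleGraph.Walk.cons hadj q).edges := by
            rw [SimpleGraph.Walk.edges_cons]
            exact List.mem_cons_self
          rw [hCF, Finset.mem_image]
          exact ⟨s(u, w), (hEmem _).mpr ((SimpleGraph.mem_edgeSet G).mpr hadj), hj _ hfe⟩
      exact Finset.mem_biUnion.mpr ⟨j, hjCF,
        Finset.mem_filter.mpr ⟨he, u, v, rfl, hreach⟩⟩
  have h2 : NEa.card ≤ ∑ j ∈ CF, (NEj j).card :=
    le_trans (Finset.card_le_card hcover) Finset.card_biUnion_le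
  have h3 : ∀ j, (NEj j).card ≤ ((EHf j).card).choose 2 := fun j =>
    nonedge_reach_bound G (H j) (hHle j) (NEj j) (EHf j) (hNEj j) (hEHfc j)
  have h4 : ∀ j ∈ CF, 1 ≤ (EHf j).card := by
    intro j hj
    rw [hCF, Finset.mem_image] at hj
    obtain ⟨e, heE, hce⟩ := hj
    refine Finset.card_pos.mpr ⟨e, ?_⟩
    rw [hEHfdef]
    exact Finset.mem_filter.mpr ⟨heE, hce⟩
  have h5 : ∑ j ∈ CF, (EHf j).card = E.card := (Finset.card_eq_sum_card_image c E).symm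
  have h6 : ∑ j ∈ CF, ((EHf j).card).choose 2
      ≤ ((∑ j ∈ CF, ((EHf j).card - 1)) + 1).choose 2 := sum_choose_two_le _ _ h4
  have h7 : ∑ j ∈ CF, ((EHf j).card - 1) + CF.card = ∑ j ∈ CF, (EHf j).card := by
    rw [Finset.card_eq_sum_ones CF, ← Finset.sum_add_distrib]
    exact Finset.sum_congr rfl (fun j hj => by have := h4 j hj; omega)
  have heq : (∑ j ∈ CF, ((EHf j).card - 1)) + 1 = E.card + 1 - CF.card := by omega
  rw [hm, hN, ← heq]
  calc n.choose 2 = NEa.card + E.card := hPE.symm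
    _ ≤ (∑ j ∈ CF, (NEj j).card) + E.card := by omega
    _ ≤ (∑ j ∈ CF, ((EHf j).card).choose 2) + E.card := by
        have := Finset.sum_le_sum (fun j (_ : j ∈ CF) => h3 j)
        omega
    _ ≤ ((∑ j ∈ CF, ((EHf j).card - 1)) + 1).choose 2 + E.card := by omega
    _ = E.card + ((∑ j ∈ CF, ((EHf j).card - 1)) + 1).choose 2 := by omega

/-- For `2 ≤ t ≤ n - 1` and `C(n-t,2) + t(n-t-1) + 1 ≤ k ≤ C(n-t,2) + t(n-t) - 1`
one has `g(n,k) = k + t - 1`: every connected graph on `n` vertices with at most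
`k + t - 1` edges has `mc(G) ≤ k`, and some connected graph on `n` vertices with
`k + t` edges has `mc(G) > k`. -/
theorem stmt_10 (n k t : ℕ) (ht : 2 ≤ t) (htn : t + 1 ≤ n)
    (hk1 : (n - t).choose 2 + t * (n - t - 1) + 1 ≤ k)
    (hk2 : (k : ℤ) ≤ ((n - t).choose 2 : ℤ) + t * (n - t) - 1) :
    (∀ G : SimpleGraph (Fin n), G.Connected →
      G.edgeSet.ncard ≤ k + t - 1 → mcNumber G ≤ k) ∧
    (∃ G : SimpleGraph (Fin n), G.Connected ∧
      G.edgeSet.ncard = k + t ∧ k < mcNumber G) := by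
  classical
  haveI : NeZero n := ⟨by omega⟩
  -- arithmetic facts
  have hid : n.choose 2 = (n - t).choose 2 + t.choose 2 + (n - t) * t := by
    conv_lhs => rw [show n = (n - t) + t by omega]
    rw [choose_two_add]
  have hnt : ((n - t : ℕ) : ℤ) = (n : ℤ) - t := by omega
  have hkup : k + 1 ≤ (n - t).choose 2 + t * (n - t) := by
    have h2 : (k : ℤ) + 1 ≤ ((n - t).choose 2 : ℤ) + (t : ℤ) * ((n - t : ℕ) : ℤ) := by
      rw [hnt]; linarith
    exact_mod_cast h2
  have hts : t.choose 2 = (t - 1).choose 2 + (t - 1) := by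
    have h := choose_two_succ (t - 1)
    rw [show t - 1 + 1 = t by omega] at h
    omega
  have hmul : (n - t) * t = t * (n - t) := mul_comm _ _
  have hmul2 : t * (n - t) = t * (n - t - 1) + t := by
    have h1 : n - t = (n - t - 1) + 1 := by omega
    conv_lhs => rw [h1]
    ring
  constructor
  · -- Part 1
    intro G hconn hcard
    apply csSup_le'
    rintro N ⟨c, hc, rfl⟩
    by_contra hlt
    push_neg at hlt
    have hk := key1 G c hc
    have hsub : G.edgeSet.ncard + 1 - (c '' G.edgeSet).ncard ≤ t - 1 := by omega
    have hch : (G.edgeSet.ncard + 1 - (c '' G.edgeSet).ncard).choose 2 ≤ (t - 1).choose 2 :=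
      Nat.choose_le_choose 2 hsub
    omega
  · -- Part 2
    set T : Finset (Fin n) := (Finset.Icc 1 t).attachFin
      (fun m hm => by have := (Finset.mem_Icc.mp hm).2; omega) with hT
    have hTmem : ∀ i : Fin n, i ∈ T ↔ 1 ≤ i.val ∧ i.val ≤ t := by
      intro i
      rw [hT, Finset.mem_attachFin, Finset.mem_Icc]
    have hTcard : T.card = t := by
      rw [hT, Finset.card_attachFin, Nat.card_Icc]
      omega
    have h0T : (0 : Fin n) ∉ T := by
      rw [hTmem]
      simp
    set PT : Finset (Sym2 (Fin n)) := T.sym2.filter (fun e => ¬ e.IsDiag) with hPT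
    have hPTcard : PT.card = t.choose 2 := by
      rw [hPT, card_sym2_not_diag, hTcard]
    have hq2 : n.choose 2 - (k + t) + 1 ≤ t.choose 2 := by omega
    have hq1 : k + t ≤ n.choose 2 := by omega
    set q := n.choose 2 - (k + t) with hqdef
    obtain ⟨R, hRsub, hRcard⟩ := Finset.exists_subset_card_eq (show q ≤ PT.card by omega)
    set G := (⊤ : SimpleGraph (Fin n)).deleteEdges ↑R with hG
    have hGadj : ∀ u v : Fin n, G.Adj u v ↔ u ≠ v ∧ s(u, v) ∉ R := by
      intro u v
      rw [hG, SimpleGraph.deleteEdges_adj, SimpleGraph.top_adj]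
      simp
    have hRT : ∀ e ∈ R, (∀ x ∈ e, x ∈ T) ∧ ¬ e.IsDiag := by
      intro e he
      have := hRsub he
      rw [hPT, Finset.mem_filter, Finset.mem_sym2_iff] at this
      exact this
    have hAdj0 : ∀ v : Fin n, v ≠ 0 → G.Adj 0 v := by
      intro v hv
      rw [hGadj]
      refine ⟨Ne.symm hv, fun hR => ?_⟩
      exact h0T ((hRT _ hR).1 0 (by simp))
    have hconn : G.Connected := by
      rw [SimpleGraph.connected_iff]
      refine ⟨?_, ⟨0⟩⟩
      have h0 : ∀ w : Fin n, G.Reachable 0 w := by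
        intro w
        by_cases hw : w = 0
        · subst hw; exact SimpleGraph.Reachable.refl 0
        · exact (hAdj0 w hw).reachable
      intro u v
      exact (h0 u).symm.trans (h0 v)
    have hRtop : (↑R : Set (Sym2 (Fin n))) ⊆ (⊤ : SimpleGraph (Fin n)).edgeSet := by
      intro e he
      rw [SimpleGraph.edgeSet_top]
      exact (hRT e he).2
    have htopcard : (⊤ : SimpleGraph (Fin n)).edgeSet.ncard = n.choose 2 := by
      rw [Set.ncard_eq_toFinset_card']
      have : (⊤ : SimpleGraph (Fin n)).edgeSet.toFinset
          = (⊤ : SimpleGraph (Fin n)).edgeFinset := rfl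
      rw [this, SimpleGraph.card_edgeFinset_top_eq_card_choose_two, Fintype.card_fin]
    have hEcard : G.edgeSet.ncard = k + t := by
      rw [hG, SimpleGraph.edgeSet_deleteEdges,
        Set.ncard_diff hRtop (Set.toFinite _), htopcard, Set.ncard_coe_finset, hRcard]
      omega
    -- the coloring
    set Stf : Finset (Sym2 (Fin n)) := T.image (fun i => s((0 : Fin n), i)) with hStf
    have hStfcard : Stf.card = t := by
      rw [hStf, Finset.card_image_of_injOn, hTcard]
      intro a _ b _ hab
      exact Sym2.congr_right.mp hab
    set enc : Sym2 (Fin n) → ℕ := fun e => ((Fintype.equivFin (Sym2 (Fin n))) e).val with henc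
    have hencinj : Function.Injective enc := by
      intro a b hab
      rw [henc] at hab
      exact (Fintype.equivFin (Sym2 (Fin n))).injective (Fin.val_injective hab)
    set c : Sym2 (Fin n) → ℕ := fun e => if e ∈ Stf then 0 else enc e + 1 with hcdef
    have hcSt : ∀ e ∈ Stf, c e = 0 := fun e he => by rw [hcdef]; simp [he]
    have hcnSt : ∀ e, e ∉ Stf → c e = enc e + 1 := fun e he => by rw [hcdef]; simp [he]
    have hStfSub : ↑Stf ⊆ G.edgeSet := by
      intro e he
      rw [Finset.mem_coe, hStf, Finset.mem_image] at he
      obtain ⟨i, hi, rfl⟩ := he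
      have hi0 : i ≠ (0 : Fin n) := fun h => h0T (h ▸ hi)
      exact (SimpleGraph.mem_edgeSet G).mpr (hAdj0 i hi0)
    have hc : IsMCColoring G c := by
      intro u v
      by_cases huv : u = v
      · subst huv
        exact ⟨SimpleGraph.Walk.nil, SimpleGraph.Walk.IsPath.nil, 0, by simp⟩
      by_cases hadj : G.Adj u v
      · refine ⟨SimpleGraph.Walk.cons hadj SimpleGraph.Walk.nil,
          (SimpleGraph.Path.singleton hadj).2, c s(u, v), ?_⟩
        intro e he
        simp only [SimpleGraph.Walk.edges_cons, SimpleGraph.Walk.edges_nil,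
          List.mem_singleton] at he
        rw [he]
      · -- nonedge: u, v ∈ T
        have hinR : s(u, v) ∈ R := by
          by_contra hR
          exact hadj ((hGadj u v).mpr ⟨huv, hR⟩)
        have hT' := (hRT _ hinR).1
        have huT : u ∈ T := hT' u (by simp)
        have hvT : v ∈ T := hT' v (by simp)
        have hu0 : u ≠ 0 := fun h => h0T (h ▸ huT)
        have hv0 : v ≠ 0 := fun h => h0T (h ▸ hvT)
        have hadj1 : G.Adj u 0 := (hAdj0 u hu0).symm
        have hadj2 : G.Adj 0 v := hAdj0 v hv0
        refine ⟨SimpleGraph.Walk.cons hadj1 (SimpleGraph.Walk.cons hadj2 SimpleGraph.Walk.nil),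
          ?_, 0, ?_⟩
        · rw [SimpleGraph.Walk.isPath_def]
          simp only [SimpleGraph.Walk.support_cons, SimpleGraph.Walk.support_nil]
          simp [List.nodup_cons, huv, hu0, Ne.symm hv0]
        · intro e he
          simp only [SimpleGraph.Walk.edges_cons, SimpleGraph.Walk.edges_nil,
            List.mem_cons, List.mem_singleton] at he
          rcases he with rfl | rfl | h
          · apply hcSt
            rw [hStf, Finset.mem_image]
            exact ⟨u, huT, Sym2.eq_swap⟩
          · apply hcSt
            rw [hStf, Finset.mem_image]
            exact ⟨v, hvT, rfl⟩
          · exact absurd h List.not_mem_nil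
    -- color count
    have hcount : (c '' G.edgeSet).ncard = k + 1 := by
      have hsplit : G.edgeSet = ↑Stf ∪ (G.edgeSet \ ↑Stf) := (Set.union_diff_cancel hStfSub).symm
      have himg : c '' G.edgeSet = {0} ∪ ((fun e => enc e + 1) '' (G.edgeSet \ ↑Stf)) := by
        conv_lhs => rw [hsplit]
        rw [Set.image_union]
        congr 1
        · have hone : (⟨1, by omega⟩ : Fin n) ∈ T := by
            rw [hTmem]
            constructor
            · simp
            · simp; omega
          have hmemst : s((0 : Fin n), (⟨1, by omega⟩ : Fin n)) ∈ Stf :=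
            Finset.mem_image_of_mem _ hone
          have hne : (↑Stf : Set (Sym2 (Fin n))).Nonempty :=
            ⟨s((0 : Fin n), (⟨1, by omega⟩ : Fin n)), Finset.mem_coe.mpr hmemst⟩
          rw [Set.image_congr (fun e (he : e ∈ (↑Stf : Set (Sym2 (Fin n)))) => hcSt e he)]
          exact hne.image_const 0
        · exact Set.image_congr (fun e he => hcnSt e he.2)
      rw [himg]
      have hdisj : Disjoint ({0} : Set ℕ) ((fun e => enc e + 1) '' (G.edgeSet \ ↑Stf)) := by
        rw [Set.disjoint_singleton_left]
        rintro ⟨e, -, he⟩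
        simp at he
      have hinj2 : Function.Injective (fun e => enc e + 1) := by
        intro a b hab
        simp only [add_left_inj] at hab
        exact hencinj hab
      rw [Set.ncard_union_eq hdisj (Set.finite_singleton 0) (Set.toFinite _),
        Set.ncard_singleton,
        Set.ncard_image_of_injOn (Function.Injective.injOn hinj2),
        Set.ncard_diff hStfSub (Set.toFinite _), hEcard, Set.ncard_coe_finset, hStfcard]
      omega
    have hmem : (k + 1) ∈ {N | ∃ c : Sym2 (Fin n) → ℕ,
        IsMCColoring G c ∧ (c '' G.edgeSet).ncard = N} := ⟨c, hc, hcount⟩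
    have hbdd : BddAbove {N | ∃ c : Sym2 (Fin n) → ℕ,
        IsMCColoring G c ∧ (c '' G.edgeSet).ncard = N} := by
      refine ⟨k + t, ?_⟩
      rintro N ⟨c', _, rfl⟩
      calc (c' '' G.edgeSet).ncard ≤ G.edgeSet.ncard := Set.ncard_image_le (Set.toFinite _)
        _ = k + t := hEcard
    refine ⟨G, hconn, hEcard, ?_⟩
    have := le_csSup hbdd hmem
    unfold mcNumber
    omega
end

section
/- Every connected graph G with n vertices and m edges satisfies mc(G) ≥ m - n + 2. -/
open SimpleGraph

section aux
variable {V : Type*}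

lemma connected_of_nonbridge {G : SimpleGraph V} (hG : G.Connected) {v w : V}
    (hadj : G.Adj v w) (hnb : ¬ G.IsBridge s(v, w)) :
    (G \ fromEdgeSet {s(v, w)}).Connected := by
  set H := G \ fromEdgeSet {s(v, w)} with hH
  have hvw : H.Reachable v w := by
    rw [isBridge_iff] at hnb
    push_neg at hnb
    exact hnb
  have key : ∀ a b : V, G.Adj a b → H.Reachable a b := by
    intro a b hab
    by_cases h : s(a, b) = s(v, w)
    · rw [Sym2.eq_iff] at h
      rcases h with ⟨rfl, rfl⟩ | ⟨rfl, rfl⟩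
      · exact hvw
      · exact hvw.symm
    · refine Adj.reachable ?_
      rw [hH]
      simp only [sdiff_adj, fromEdgeSet_adj, Set.mem_singleton_iff]
      exact ⟨hab, fun hc => h hc.1⟩
  haveI := hG.nonempty
  refine ⟨fun a b => ?_⟩
  obtain ⟨p⟩ := hG.preconnected a b
  induction p with
  | nil => exact Reachable.refl _
  | cons h p ih => exact (key _ _ h).trans ih

lemma exists_spanning_tree_aux [Finite (Sym2 V)] :
    ∀ n : ℕ, ∀ G : SimpleGraph V, G.edgeSet.ncard = n → G.Connected →
      ∃ T : SimpleGraph V, T ≤ G ∧ T.IsTree := by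
  intro n
  induction n using Nat.strong_induction_on with
  | _ n ih =>
    intro G hn hG
    by_cases hac : G.IsAcyclic
    · exact ⟨G, le_rfl, ⟨hG, hac⟩⟩
    · rw [isAcyclic_iff_forall_adj_isBridge] at hac
      push_neg at hac
      obtain ⟨v, w, hadj, hnb⟩ := hac
      set H := G \ fromEdgeSet {s(v, w)} with hH
      have hHle : H ≤ G := sdiff_le
      have hHconn : H.Connected := connected_of_nonbridge hG hadj hnb
      have hEcard : H.edgeSet.ncard < n := by
        have hsub : H.edgeSet ⊆ G.edgeSet \ {s(v, w)} := by
          rw [hH, edgeSet_sdiff, edgeSet_fromEdgeSet]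
          intro e he
          refine ⟨he.1, fun hc => he.2 ⟨hc, ?_⟩⟩
          have := G.not_isDiag_of_mem_edgeSet he.1
          rw [hc] at this ⊢
          exact this
        calc H.edgeSet.ncard ≤ (G.edgeSet \ {s(v, w)}).ncard :=
              Set.ncard_le_ncard hsub (Set.toFinite _)
          _ < G.edgeSet.ncard := by
              refine Set.ncard_lt_ncard ?_ (Set.toFinite _)
              exact ⟨Set.diff_subset, fun hc =>
                (hc (G.mem_edgeSet.mpr hadj)).2 rfl⟩
          _ = n := hn
      obtain ⟨T, hT1, hT2⟩ := ih _ hEcard H rfl hHconn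
      exact ⟨T, hT1.trans hHle, hT2⟩

end aux

/-- Every (nontrivial) connected graph with `n` vertices and `m` edges satisfies
`mc(G) ≥ m - n + 2`. -/
theorem stmt_12 {V : Type*} [Fintype V] [Nontrivial V]
    (G : SimpleGraph V) (hG : G.Connected) :
    (G.edgeSet.ncard : ℤ) - Fintype.card V + 2 ≤ (mcNumber G : ℤ) := by
  classical
  obtain ⟨T, hTle, hTtree⟩ :=
    exists_spanning_tree_aux G.edgeSet.ncard G rfl hG
  obtain ⟨f, hf⟩ := exists_injective_nat (Sym2 V)
  set c : Sym2 V → ℕ := fun e => if e ∈ T.edgeSet then 0 else f e + 1 with hc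
  have hmc : IsMCColoring G c := by
    intro u v
    obtain ⟨p⟩ := hTtree.isConnected.preconnected u v
    set q : T.Walk u v := p.toPath.val with hq
    have hqedges : (SimpleGraph.Walk.mapLe hTle q).edges = q.edges := by
      simp only [SimpleGraph.Walk.mapLe, SimpleGraph.Walk.edges_map]
      have : Sym2.map (Hom.ofLE hTle) = id := by
        have : ⇑(Hom.ofLE hTle) = id := rfl
        rw [this, Sym2.map_id]
      rw [this, List.map_id]
    refine ⟨q.mapLe hTle, (SimpleGraph.Walk.mapLe_isPath hTle).mpr p.toPath.2, 0, ?_⟩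
    intro e he
    rw [hqedges] at he
    have : e ∈ T.edgeSet := q.edges_subset_edgeSet he
    simp [hc, this]
  -- count colors
  set D : Set (Sym2 V) := G.edgeSet \ T.edgeSet with hD
  have hTsub : T.edgeSet ⊆ G.edgeSet := edgeSet_mono hTle
  have hTne : T.edgeSet.Nonempty := by
    obtain ⟨a, b, hab⟩ := exists_pair_ne V
    obtain ⟨p⟩ := hTtree.isConnected.preconnected a b
    cases p with
    | nil => exact absurd rfl hab
    | cons h _ => exact ⟨_, T.mem_edgeSet.mpr h⟩
  have himg : c '' G.edgeSet = insert 0 ((fun e => f e + 1) '' D) := by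
    ext k
    constructor
    · rintro ⟨e, he, rfl⟩
      by_cases h : e ∈ T.edgeSet
      · simp [hc, h]
      · exact Set.mem_insert_iff.mpr (Or.inr ⟨e, ⟨he, h⟩, by simp [hc, h]⟩)
    · rintro (rfl | ⟨e, ⟨heG, heT⟩, rfl⟩)
      · obtain ⟨e, he⟩ := hTne
        exact ⟨e, hTsub he, by simp [hc, he]⟩
      · exact ⟨e, heG, by simp [hc, heT]⟩
  have hinj : Function.Injective (fun e : Sym2 V => f e + 1) := by
    intro a b hab
    exact hf (by simpa using hab)
  have hcard : (c '' G.edgeSet).ncard = D.ncard + 1 := by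
    rw [himg, Set.ncard_insert_of_notMem (by rintro ⟨e, -, h⟩; simp at h)
      ((Set.toFinite D).image _), Set.ncard_image_of_injective _ hinj]
  -- mcNumber bound
  have hmem : D.ncard + 1 ∈
      {k | ∃ c : Sym2 V → ℕ, IsMCColoring G c ∧ (c '' G.edgeSet).ncard = k} :=
    ⟨c, hmc, hcard⟩
  have hbdd : BddAbove
      {k | ∃ c : Sym2 V → ℕ, IsMCColoring G c ∧ (c '' G.edgeSet).ncard = k} := by
    refine ⟨G.edgeSet.ncard, ?_⟩
    rintro k ⟨c', -, rfl⟩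
    exact Set.ncard_image_le (Set.toFinite _)
  have hle : D.ncard + 1 ≤ mcNumber G := le_csSup hbdd hmem
  -- arithmetic
  have hDcard : D.ncard = G.edgeSet.ncard - T.edgeSet.ncard :=
    Set.ncard_diff hTsub
  have hTcard : T.edgeSet.ncard + 1 = Fintype.card V := by
    have := hTtree.card_edgeFinset
    rwa [Set.ncard_eq_toFinset_card' , ← edgeFinset]
  have hle' : T.edgeSet.ncard ≤ G.edgeSet.ncard :=
    Set.ncard_le_ncard hTsub (Set.toFinite _)
  have : (D.ncard : ℤ) = G.edgeSet.ncard - T.edgeSet.ncard := by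
    rw [hDcard]; omega
  have h2 : ((D.ncard + 1 : ℕ) : ℤ) ≤ (mcNumber G : ℤ) := by exact_mod_cast hle
  push_cast at h2 ⊢
  omega
end

section
/- Let G be a connected graph with n > 3 vertices and m edges. If the diameter of G is at least 3, then mc(G) = m - n + 2. -/
open Set

section MCHelpers

variable {V : Type*}

variable {V : Type*}

lemma mc_exists_par {H : SimpleGraph V} {w r : V} (hr : H.Reachable w r) (hw : w ≠ r) :
    ∃ z, H.Adj w z ∧ H.dist z r + 1 = H.dist w r := by
  obtain ⟨p, hp⟩ := hr.exists_walk_length_eq_dist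
  cases p with
  | nil => exact absurd rfl hw
  | @cons _ x _ h q =>
    refine ⟨x, h, ?_⟩
    have h1 : H.dist x r ≤ q.length := SimpleGraph.dist_le q
    obtain ⟨q', hq'⟩ := SimpleGraph.Reachable.exists_walk_length_eq_dist (⟨q⟩ : H.Reachable x r)
    have h2 : H.dist w r ≤ (SimpleGraph.Walk.cons h q').length := SimpleGraph.dist_le _
    simp only [SimpleGraph.Walk.length_cons] at hp h2
    omega

open Classical in
noncomputable def mcPar (H : SimpleGraph V) (r w : V) : Sym2 V :=
  if h : H.Reachable w r ∧ w ≠ r then s(w, Classical.choose (mc_exists_par h.1 h.2))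
  else s(w, w)

lemma mcPar_spec {H : SimpleGraph V} {r w : V} (h1 : H.Reachable w r) (h2 : w ≠ r) :
    ∃ z, mcPar H r w = s(w, z) ∧ H.Adj w z ∧ H.dist z r + 1 = H.dist w r := by
  classical
  rw [mcPar]
  rw [dif_pos (⟨h1, h2⟩ : H.Reachable w r ∧ w ≠ r)]
  exact ⟨_, rfl, Classical.choose_spec (mc_exists_par h1 h2)⟩

lemma mcPar_injOn (H : SimpleGraph V) (r : V) :
    Set.InjOn (mcPar H r) {w | H.Reachable w r ∧ w ≠ r} := by
  rintro w ⟨hw1, hw2⟩ w' ⟨hw1', hw2'⟩ he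
  obtain ⟨z, e1, a1, d1⟩ := mcPar_spec hw1 hw2
  obtain ⟨z', e1', a1', d1'⟩ := mcPar_spec hw1' hw2'
  rw [e1, e1'] at he
  rcases Sym2.eq_iff.mp he with ⟨h1, _⟩ | ⟨h1, h2⟩
  · exact h1
  · subst h1; subst h2; omega

/-- the set of "parent edges" toward root `r`. -/
noncomputable def mcEC (H : SimpleGraph V) (r : V) : Set (Sym2 V) :=
  mcPar H r '' {w | H.Reachable w r ∧ w ≠ r}

lemma mcEC_subset (H : SimpleGraph V) (r : V) : mcEC H r ⊆ H.edgeSet := by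
  rintro e ⟨w, ⟨hw1, hw2⟩, rfl⟩
  obtain ⟨z, e1, a1, _⟩ := mcPar_spec hw1 hw2
  rw [e1]; exact a1

lemma mcEC_reach {H : SimpleGraph V} {r : V} {e : Sym2 V} (he : e ∈ mcEC H r) :
    ∀ y ∈ e, H.Reachable y r := by
  obtain ⟨w, ⟨hw1, hw2⟩, rfl⟩ := he
  obtain ⟨z, e1, a1, _⟩ := mcPar_spec hw1 hw2
  intro y hy
  rw [e1, Sym2.mem_iff] at hy
  rcases hy with rfl | rfl
  · exact hw1
  · exact a1.symm.reachable.trans hw1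

lemma mcEC_disjoint {H : SimpleGraph V} {r r' : V} (h : ¬ H.Reachable r r') :
    Disjoint (mcEC H r) (mcEC H r') := by
  rw [Set.disjoint_left]
  rintro e he he'
  obtain ⟨w, ⟨hw1, hw2⟩, rfl⟩ := he
  obtain ⟨z, e1, a1, _⟩ := mcPar_spec hw1 hw2
  have hw' : w ∈ mcPar H r w := by rw [e1]; exact Sym2.mem_mk_left w z
  exact h ((hw1.symm).trans (mcEC_reach he' w hw'))

lemma mc_key [Finite V] (H : SimpleGraph V) (r x : V) (B : Set V) (hx : x ∉ B) (hxr : x ≠ r)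
    (hxre : H.Reachable x r) (hB : ∀ w ∈ B, H.Reachable w r ∧ w ≠ r) :
    B.ncard + 1 ≤ (mcEC H r).ncard := by
  have hsub : insert x B ⊆ {w | H.Reachable w r ∧ w ≠ r} := by
    rintro w (rfl | hw)
    · exact ⟨hxre, hxr⟩
    · exact hB w hw
  calc B.ncard + 1 = (insert x B).ncard := (Set.ncard_insert_of_notMem hx (Set.toFinite B)).symm
    _ ≤ {w | H.Reachable w r ∧ w ≠ r}.ncard := Set.ncard_le_ncard hsub (Set.toFinite _)
    _ = (mcEC H r).ncard := (Set.ncard_image_of_injOn (mcPar_injOn H r)).symm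

lemma mc_adj_of_reachable {H : SimpleGraph V} {a b : V} (h : H.Reachable a b) (hne : a ≠ b) :
    ∃ x, H.Adj b x := by
  obtain ⟨p⟩ := h.symm
  cases p with
  | nil => exact absurd rfl hne.symm
  | cons h q => exact ⟨_, h⟩

end MCHelpers

section MCBounds

variable {V : Type*} [Fintype V]

lemma mc_lower (G : SimpleGraph V) (hG : G.Connected) (r : V) (hcard : 2 ≤ Fintype.card V) :
    ∃ c : Sym2 V → ℕ, IsMCColoring G c ∧
      (c '' G.edgeSet).ncard + (Fintype.card V - 1) = G.edgeSet.ncard + 1 ∧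
      Fintype.card V - 1 ≤ G.edgeSet.ncard := by
  classical
  set T : Set (Sym2 V) := mcEC G r with hT
  have hTsub : T ⊆ G.edgeSet := mcEC_subset G r
  -- the set of non-root vertices
  have hCS : {w | G.Reachable w r ∧ w ≠ r} = ((Finset.univ \ {r} : Finset V) : Set V) := by
    ext w; simp [hG w r]
  have hTcard : T.ncard = Fintype.card V - 1 := by
    rw [hT, mcEC, Set.ncard_image_of_injOn (mcPar_injOn G r), hCS, Set.ncard_coe_finset,
      Finset.card_sdiff_of_subset (by simp), Finset.card_singleton, Finset.card_univ]
  have hmn : Fintype.card V - 1 ≤ G.edgeSet.ncard := by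
    rw [← hTcard]; exact Set.ncard_le_ncard hTsub (Set.toFinite _)
  -- connectivity through T
  have hTreach : ∀ w, (SimpleGraph.fromEdgeSet T).Reachable w r := by
    have main : ∀ d, ∀ w, G.dist w r ≤ d → (SimpleGraph.fromEdgeSet T).Reachable w r := by
      intro d
      induction d with
      | zero =>
        intro w hw
        have : w = r := (hG.dist_eq_zero_iff).mp (Nat.le_zero.mp hw)
        subst this; rfl
      | succ d ih =>
        intro w hw
        by_cases hwr : w = r
        · subst hwr; rfl
        · obtain ⟨z, he, ha, hd⟩ := mcPar_spec (hG w r) hwr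
          have hmem : mcPar G r w ∈ T := ⟨w, ⟨hG w r, hwr⟩, rfl⟩
          have hadj : (SimpleGraph.fromEdgeSet T).Adj w z := by
            rw [SimpleGraph.fromEdgeSet_adj]
            exact ⟨by rw [← he]; exact hmem, ha.ne⟩
          have hdzr : G.dist z r ≤ d := by
            have := hG.pos_dist_of_ne  hwr
            omega
          exact hadj.reachable.trans (ih z hdzr)
    intro w; exact main (G.dist w r) w le_rfl
  -- injective enumeration of Sym2 V
  obtain ⟨enum, henum⟩ := Countable.exists_injective_nat (Sym2 V)
  set c : Sym2 V → ℕ := fun e => if e ∈ T then 0 else if e ∈ G.edgeSet then enum e + 1 else 0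
    with hc
  refine ⟨c, ?_, ?_, hmn⟩
  · -- MC coloring
    intro a b
    obtain ⟨q⟩ := (hTreach a).trans (hTreach b).symm
    have hqT : ∀ e ∈ q.bypass.edges, e ∈ T := by
      intro e he
      have := q.bypass.edges_subset_edgeSet he
      rw [SimpleGraph.edgeSet_fromEdgeSet] at this
      exact this.1
    have hqe : ∀ e ∈ q.bypass.edges, e ∈ G.edgeSet := fun e he => hTsub (hqT e he)
    refine ⟨q.bypass.transfer G hqe, (SimpleGraph.Walk.bypass_isPath q).transfer hqe, 0, ?_⟩
    intro e he
    rw [SimpleGraph.Walk.edges_transfer] at he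
    rw [hc]
    simp only [if_pos (hqT e he)]
  · -- number of colors
    have himg : c '' G.edgeSet = {0} ∪ (fun e => enum e + 1) '' (G.edgeSet \ T) := by
      ext x
      constructor
      · rintro ⟨e, he, rfl⟩
        by_cases heT : e ∈ T
        · left; simp [hc, if_pos heT]
        · right; exact ⟨e, ⟨he, heT⟩, by simp [hc, heT, he]⟩
      · rintro (hx | ⟨e, ⟨he, heT⟩, rfl⟩)
        · -- 0 is attained: T is nonempty
          obtain ⟨w, hw⟩ := Fintype.exists_ne_of_one_lt_card (by omega) r
          have hmem : mcPar G r w ∈ T := ⟨w, ⟨hG w r, hw⟩, rfl⟩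
          simp only [Set.mem_singleton_iff] at hx
          exact ⟨mcPar G r w, hTsub hmem, by simp [hc, if_pos hmem, hx]⟩
        · exact ⟨e, he, by simp [hc, heT, he]⟩
    rw [himg, Set.ncard_union_eq (by
        rw [Set.disjoint_left]; rintro x rfl ⟨e, _, he⟩; simp at he)
      (Set.toFinite _) (Set.toFinite _)]
    have hinj : Set.InjOn (fun e => enum e + 1) (G.edgeSet \ T) := fun a _ b _ h => by
      simp only [Nat.add_right_cancel_iff] at h
      exact henum h
    rw [Set.ncard_singleton, Set.ncard_image_of_injOn hinj,
      Set.ncard_diff hTsub (Set.toFinite _), hTcard]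
    omega

lemma mc_upper (G : SimpleGraph V) {u v : V} (hG : G.Connected) (h3 : 3 ≤ G.dist u v)
    (c : Sym2 V → ℕ) (hc : IsMCColoring G c) :
    (c '' G.edgeSet).ncard + (Fintype.card V - 2) ≤ G.edgeSet.ncard := by
  classical
  have huv : u ≠ v := by rintro rfl; simp [SimpleGraph.dist_self] at h3
  have hnocommon : ∀ x, ¬(G.Adj u x ∧ G.Adj v x) := by
    rintro x ⟨h1, h2⟩
    have ht := hG.dist_triangle (u := u) (v := x) (w := v)
    have d1 : G.dist u x = 1 := SimpleGraph.dist_eq_one_iff_adj.mpr h1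
    have d2 : G.dist x v = 1 := by
      rw [SimpleGraph.dist_comm]; exact SimpleGraph.dist_eq_one_iff_adj.mpr h2
    omega
  -- color classes and class graphs
  set cls : ℕ → Set (Sym2 V) := fun j => {e | e ∈ G.edgeSet ∧ c e = j} with hcls
  set H : ℕ → SimpleGraph V := fun j => SimpleGraph.fromEdgeSet (cls j) with hH
  have hHedge : ∀ j, (H j).edgeSet = cls j := by
    intro j
    rw [hH, SimpleGraph.edgeSet_fromEdgeSet]
    ext e
    simp only [Set.mem_diff, Set.mem_setOf_eq, and_iff_left_iff_imp]
    intro he hdiag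
    exact G.not_isDiag_of_mem_edgeSet he.1 hdiag
  have hHle : ∀ j, H j ≤ G := by
    intro j a b hab
    rw [hH, SimpleGraph.fromEdgeSet_adj] at hab
    exact (SimpleGraph.mem_edgeSet G).mp hab.1.1
  -- target function and monochromatic paths
  set t : V → V := fun w => if G.Adj u w then v else u with ht
  choose P hPp K hK using fun w => hc w (t w)
  have hreacht : ∀ w, (H (K w)).Reachable w (t w) := by
    intro w
    refine ⟨(P w).transfer (H (K w)) ?_⟩
    intro e he
    rw [hHedge]
    exact ⟨(P w).edges_subset_edgeSet he, hK w e he⟩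
  set R : V → V := fun w => if (H (K w)).Reachable w u then u else t w with hR
  have htuv : ∀ w, t w = u ∨ t w = v := by
    intro w; rw [ht]; dsimp only; split_ifs; exacts [Or.inr rfl, Or.inl rfl]
  have hRuv : ∀ w, R w = u ∨ R w = v := by
    intro w; rw [hR]; dsimp only; split_ifs; exacts [Or.inl rfl, htuv w]
  have hreachR : ∀ w, (H (K w)).Reachable w (R w) := by
    intro w; rw [hR]; dsimp only; split_ifs with h; exacts [h, hreacht w]
  set D : Set V := {w | w ≠ u ∧ w ≠ v} with hD
  have hDne : ∀ w ∈ D, w ≠ R w := by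
    rintro w ⟨h1, h2⟩; rcases hRuv w with h | h <;> rw [h] <;> assumption
  set ψ : V → Sym2 V := fun w => mcPar (H (K w)) (R w) w with hψ
  have hψEC : ∀ w ∈ D, ψ w ∈ mcEC (H (K w)) (R w) := by
    intro w hw; exact ⟨w, ⟨hreachR w, hDne w hw⟩, rfl⟩
  have hψcls : ∀ w ∈ D, ψ w ∈ cls (K w) := by
    intro w hw
    rw [← hHedge]
    exact mcEC_subset _ _ (hψEC w hw)
  have hψG : ∀ w ∈ D, ψ w ∈ G.edgeSet := fun w hw => (hψcls w hw).1
  have hψc : ∀ w ∈ D, c (ψ w) = K w := fun w hw => (hψcls w hw).2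
  -- injectivity of ψ on D
  have hinj : Set.InjOn ψ D := by
    intro w hw w' hw' he
    have hKK : K w = K w' := by
      rw [← hψc w hw, ← hψc w' hw', he]
    obtain ⟨z, e1, a1, d1⟩ := mcPar_spec (hreachR w) (hDne w hw)
    obtain ⟨z', e1', a1', d1'⟩ := mcPar_spec (hreachR w') (hDne w' hw')
    have heq : s(w, z) = s(w', z') := by rw [← e1, ← e1']; exact he
    rcases Sym2.eq_iff.mp heq with ⟨hh, _⟩ | ⟨hh1, hh2⟩
    · exact hh
    · -- w' = z, z' = w : w and w' adjacent in H (K w)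
      have hadj : (H (K w)).Adj w w' := hh2 ▸ a1
      have hRR : R w = R w' := by
        by_cases hru : (H (K w)).Reachable w u
        · have hru' : (H (K w')).Reachable w' u := by
            rw [← hKK]; exact hadj.symm.reachable.trans hru
          rw [hR]; dsimp only; rw [if_pos hru, if_pos hru']
        · have hru' : ¬ (H (K w')).Reachable w' u := by
            rw [← hKK]; intro hcon; exact hru (hadj.reachable.trans hcon)
          have htw : t w = v := by
            rcases htuv w with hh | hh
            · exact absurd (hh ▸ hreacht w) hru
            · exact hh
          have htw' : t w' = v := by
            rcases htuv w' with hh | hh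
            · exact absurd (hh ▸ hreacht w') (hKK ▸ hru')
            · exact hh
          rw [hR]; dsimp only; rw [if_neg hru, if_neg hru', htw, htw']
      have he' : mcPar (H (K w)) (R w) w = mcPar (H (K w)) (R w) w' := by
        have h0 : mcPar (H (K w)) (R w) w = mcPar (H (K w')) (R w') w' := he
        rw [← hKK, ← hRR] at h0; exact h0
      refine mcPar_injOn (H (K w)) (R w) ⟨hreachR w, hDne w hw⟩ ⟨?_, ?_⟩ he'
      · rw [hKK, hRR]; exact hreachR w'
      · rw [hRR]; exact hDne w' hw'
  -- representative edge per color
  have hrep : ∀ j ∈ c '' G.edgeSet, ∃ e, e ∈ cls j ∧ e ∉ ψ '' D := by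
    intro j hj
    obtain ⟨e0, he0, hce0⟩ := hj
    have hclsne : (cls j).Nonempty := ⟨e0, he0, hce0⟩
    set A : Set V := {w | w ∈ D ∧ K w = j} with hA
    have hAD : A ⊆ D := fun w hw => hw.1
    have hKk : ∀ w ∈ A, K w = j := fun w hw => hw.2
    have hcount : A.ncard + 1 ≤ (cls j).ncard := by
      rcases Set.eq_empty_or_nonempty A with hAe | hAne
      · rw [hAe, Set.ncard_empty]
        have := (Set.ncard_pos (Set.toFinite _)).mpr hclsne
        omega
      · have hreachRj : ∀ w ∈ A, (H j).Reachable w (R w) := fun w hw => hKk w hw ▸ hreachR w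
        have hECsub : ∀ r, mcEC (H j) r ⊆ cls j := fun r => (hHedge j) ▸ mcEC_subset (H j) r
        by_cases hruv : (H j).Reachable u v
        · -- u, v in the same component of the class graph
          have hB : ∀ w ∈ A, (H j).Reachable w u ∧ w ≠ u := by
            intro w hw
            refine ⟨?_, (hAD hw).1⟩
            rcases hRuv w with hh | hh
            · exact hh ▸ hreachRj w hw
            · exact (hh ▸ hreachRj w hw).trans hruv.symm
          have hkey := mc_key (H j) u v A (fun hv => (hv.1 : v ∈ D).2 rfl) huv.symm hruv.symm hB
          exact hkey.trans (Set.ncard_le_ncard (hECsub u) (Set.toFinite _))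
        · -- u, v in different components
          set Au : Set V := {w | w ∈ A ∧ R w = u} with hAu
          set Av : Set V := {w | w ∈ A ∧ R w = v} with hAv
          have hApart : A = Au ∪ Av := by
            ext w
            constructor
            · intro hw
              rcases hRuv w with hh | hh
              · exact Or.inl ⟨hw, hh⟩
              · exact Or.inr ⟨hw, hh⟩
            · rintro (hw | hw) <;> exact hw.1
          have hdisjA : Disjoint Au Av := by
            rw [Set.disjoint_left]
            rintro w ⟨_, h1⟩ ⟨_, h2⟩
            exact huv (h1.symm.trans h2)
          have hAuprop : ∀ w ∈ Au, ((H j).Reachable w u ∧ w ≠ u) ∧ ¬ G.Adj u w := by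
            rintro w ⟨hwA, hwR⟩
            have hre : (H j).Reachable w u := hwR ▸ hreachRj w hwA
            refine ⟨⟨hre, (hAD hwA).1⟩, ?_⟩
            intro hadj
            have htw : t w = v := by rw [ht]; dsimp only; rw [if_pos hadj]
            have h2 := hreacht w
            rw [htw, hKk w hwA] at h2
            exact hruv (hre.symm.trans h2)
          have hAvprop : ∀ w ∈ Av, ((H j).Reachable w v ∧ w ≠ v) ∧ G.Adj u w := by
            rintro w ⟨hwA, hwR⟩
            have hre : (H j).Reachable w v := hwR ▸ hreachRj w hwA
            refine ⟨⟨hre, (hAD hwA).2⟩, ?_⟩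
            by_contra hadj
            have htw : t w = u := by rw [ht]; dsimp only; rw [if_neg hadj]
            have hRu : R w = u := by
              rw [hR]; dsimp only; split_ifs with h
              · rfl
              · exact htw
            exact huv (hRu.symm.trans hwR)
          have hAcard : A.ncard = Au.ncard + Av.ncard := by
            rw [hApart, Set.ncard_union_eq hdisjA (Set.toFinite _) (Set.toFinite _)]
          have hkeyu : Au.Nonempty → Au.ncard + 1 ≤ (mcEC (H j) u).ncard := by
            rintro ⟨w1, hw1⟩
            obtain ⟨⟨hre1, hne1⟩, _⟩ := hAuprop w1 hw1
            obtain ⟨x1, hx1⟩ := mc_adj_of_reachable hre1 hne1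
            have hx1G : G.Adj u x1 := hHle j hx1
            refine mc_key (H j) u x1 Au ?_ hx1.ne' hx1.symm.reachable
              (fun w hw => (hAuprop w hw).1)
            intro hx1A
            exact (hAuprop x1 hx1A).2 hx1G
          have hkeyv : Av.Nonempty → Av.ncard + 1 ≤ (mcEC (H j) v).ncard := by
            rintro ⟨w1, hw1⟩
            obtain ⟨⟨hre1, hne1⟩, _⟩ := hAvprop w1 hw1
            obtain ⟨x2, hx2⟩ := mc_adj_of_reachable hre1 hne1
            have hx2G : G.Adj v x2 := hHle j hx2
            refine mc_key (H j) v x2 Av ?_ hx2.ne' hx2.symm.reachable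
              (fun w hw => (hAvprop w hw).1)
            intro hx2A
            exact hnocommon x2 ⟨(hAvprop x2 hx2A).2, hx2G⟩
          rcases Set.eq_empty_or_nonempty Au with hAue | hAune <;>
            rcases Set.eq_empty_or_nonempty Av with hAve | hAvne
          · exfalso
            rw [hApart, hAue, hAve, Set.empty_union] at hAne
            exact hAne.ne_empty rfl
          · have := hkeyv hAvne
            have h5 := Set.ncard_le_ncard (hECsub v) (Set.toFinite (cls j))
            rw [hAcard, hAue, Set.ncard_empty]
            omega
          · have := hkeyu hAune
            have h5 := Set.ncard_le_ncard (hECsub u) (Set.toFinite (cls j))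
            rw [hAcard, hAve, Set.ncard_empty]
            omega
          · have h1 := hkeyu hAune
            have h2 := hkeyv hAvne
            have hdisjEC : Disjoint (mcEC (H j) u) (mcEC (H j) v) := mcEC_disjoint hruv
            have h6 : (mcEC (H j) u ∪ mcEC (H j) v).ncard
                = (mcEC (H j) u).ncard + (mcEC (H j) v).ncard :=
              Set.ncard_union_eq hdisjEC (Set.toFinite _) (Set.toFinite _)
            have h5 : (mcEC (H j) u ∪ mcEC (H j) v).ncard ≤ (cls j).ncard :=
              Set.ncard_le_ncard (Set.union_subset (hECsub u) (hECsub v)) (Set.toFinite _)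
            rw [hAcard]
            omega
    -- produce the representative from the strict count
    have himg : ψ '' A ⊆ cls j := by
      rintro e ⟨w, hw, rfl⟩
      exact (hKk w hw) ▸ hψcls w (hAD hw)
    have hcardim : (ψ '' A).ncard = A.ncard := Set.ncard_image_of_injOn (hinj.mono hAD)
    have hnots : ¬ (cls j ⊆ ψ '' A) := by
      intro hsub
      have := Set.ncard_le_ncard hsub (Set.toFinite _)
      omega
    obtain ⟨e, he, hnotin⟩ := Set.not_subset.mp hnots
    refine ⟨e, he, ?_⟩
    rintro ⟨w, hw, rfl⟩
    exact hnotin ⟨w, ⟨hw, (hψc w hw).symm.trans he.2⟩, rfl⟩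
  -- assemble the final count
  have hrep' : ∀ j, ∃ e, j ∈ c '' G.edgeSet → (e ∈ cls j ∧ e ∉ ψ '' D) := by
    intro j
    by_cases hj : j ∈ c '' G.edgeSet
    · obtain ⟨e, h1, h2⟩ := hrep j hj
      exact ⟨e, fun _ => ⟨h1, h2⟩⟩
    · exact ⟨s(u, u), fun h => absurd h hj⟩
  choose rep hreps using hrep'
  have hrinj : Set.InjOn rep (c '' G.edgeSet) := by
    intro a ha b hb hab
    have h1 := (hreps a ha).1.2
    have h2 := (hreps b hb).1.2
    rw [← h1, ← h2, hab]
  have hrsub : rep '' (c '' G.edgeSet) ⊆ G.edgeSet := by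
    rintro e ⟨j, hj, rfl⟩
    exact (hreps j hj).1.1
  have hψsub : ψ '' D ⊆ G.edgeSet := by rintro e ⟨w, hw, rfl⟩; exact hψG w hw
  have hdisj2 : Disjoint (rep '' (c '' G.edgeSet)) (ψ '' D) := by
    rw [Set.disjoint_left]
    rintro e ⟨j, hj, rfl⟩ hin
    exact (hreps j hj).2 hin
  have hDcard : D.ncard = Fintype.card V - 2 := by
    have hDeq : D = ((Finset.univ \ {u, v} : Finset V) : Set V) := by
      ext w
      simp [hD, not_or]
    rw [hDeq, Set.ncard_coe_finset, Finset.card_sdiff_of_subset (by simp), Finset.card_univ]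
    have : ({u, v} : Finset V).card = 2 := by
      rw [Finset.card_insert_of_notMem (by simp [huv]), Finset.card_singleton]
    rw [this]
  have hcount2 : (c '' G.edgeSet).ncard + (Fintype.card V - 2)
      = (rep '' (c '' G.edgeSet) ∪ ψ '' D).ncard := by
    rw [Set.ncard_union_eq hdisj2 (Set.toFinite _) (Set.toFinite _),
      Set.ncard_image_of_injOn hrinj, Set.ncard_image_of_injOn hinj, hDcard]
  rw [hcount2]
  exact Set.ncard_le_ncard (Set.union_subset hrsub hψsub) (Set.toFinite _)

end MCBounds

/-- A connected graph with `n > 3` vertices, `m` edges, and diameter at least 3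
satisfies `mc(G) = m - n + 2`. -/
theorem stmt_13 {V : Type*} [Fintype V] (G : SimpleGraph V) (hG : G.Connected)
    (hn : 3 < Fintype.card V) (hdiam : ∃ u v : V, 3 ≤ G.dist u v) :
    (mcNumber G : ℤ) = (G.edgeSet.ncard : ℤ) - Fintype.card V + 2 := by
  classical
  obtain ⟨u, v, h3⟩ := hdiam
  obtain ⟨c₀, hc₀, hcard0, hmn⟩ := mc_lower G hG u (by omega)
  have hub : ∀ x ∈ {k | ∃ c : Sym2 V → ℕ, IsMCColoring G c ∧ (c '' G.edgeSet).ncard = k},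
      x + (Fintype.card V - 2) ≤ G.edgeSet.ncard := by
    rintro x ⟨c, hcmc, rfl⟩
    exact mc_upper G hG h3 c hcmc
  have hmemS : (c₀ '' G.edgeSet).ncard ∈
      {k | ∃ c : Sym2 V → ℕ, IsMCColoring G c ∧ (c '' G.edgeSet).ncard = k} := ⟨c₀, hc₀, rfl⟩
  have hbdd : BddAbove {k | ∃ c : Sym2 V → ℕ, IsMCColoring G c ∧ (c '' G.edgeSet).ncard = k} :=
    ⟨G.edgeSet.ncard, fun x hx => by have := hub x hx; omega⟩
  have hsup : mcNumber G = (c₀ '' G.edgeSet).ncard := by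
    apply le_antisymm
    · apply csSup_le ⟨_, hmemS⟩
      intro x hx
      have h1 := hub x hx
      omega
    · exact le_csSup hbdd hmemS
  rw [hsup]
  omega
end

section
/- Let G be a connected graph with n > 3 vertices and m edges. If G has a cut vertex (a vertex whose removal disconnects G), then mc(G) = m - n + 2. -/
set_option maxHeartbeats 1000000


namespace MCAux

open SimpleGraph Finset

variable {V : Type*}

lemma ineq (a b α β : ℤ) (ha0 : 0 ≤ a) (hb0 : 0 ≤ b) (haα : a ≤ α) (hbβ : b ≤ β)
    (hab : 1 ≤ a + b) (hα : 1 ≤ α) (hβ : 1 ≤ β) :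
    a * b * (α + β - 1) ≤ (a + b - 1) * (α * β) := by
  rcases eq_or_lt_of_le ha0 with h | h
  · subst h
    have hb1 : 1 ≤ b := by omega
    simp only [zero_mul, zero_add]
    nlinarith [mul_nonneg (mul_nonneg (by omega : (0:ℤ) ≤ b - 1) (by omega : (0:ℤ) ≤ α)) (by omega : (0:ℤ) ≤ β)]
  rcases eq_or_lt_of_le hb0 with h' | h'
  · subst h'
    have ha1 : 1 ≤ a := by omega
    simp only [mul_zero, zero_mul, add_zero]
    nlinarith [mul_nonneg (mul_nonneg (by omega : (0:ℤ) ≤ a - 1) (by omega : (0:ℤ) ≤ α)) (by omega : (0:ℤ) ≤ β)]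
  · nlinarith [mul_nonneg (mul_nonneg (by omega : (0:ℤ) ≤ α - a) (by omega : (0:ℤ) ≤ b)) (by omega : (0:ℤ) ≤ β - 1),
      mul_nonneg (mul_nonneg (by omega : (0:ℤ) ≤ a - 1) (by omega : (0:ℤ) ≤ α)) (by omega : (0:ℤ) ≤ β - b)]

lemma reachable_induce_of_walk {G : SimpleGraph V} {W : Set V} {u w : V}
    (p : G.Walk u w) (hp : ∀ z ∈ p.support, z ∈ W) :
    ∃ (hu : u ∈ W) (hw : w ∈ W), (G.induce W).Reachable ⟨u, hu⟩ ⟨w, hw⟩ := by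
  induction p with
  | nil => exact ⟨hp _ (by simp), hp _ (by simp), Reachable.refl _⟩
  | @cons a b d h q ih =>
    obtain ⟨hb, hw, hr⟩ := ih (fun z hz => hp z (by simp [hz]))
    have ha : a ∈ W := hp a (by simp)
    have hadj : (G.induce W).Adj ⟨a, ha⟩ ⟨b, hb⟩ := by
      simpa [SimpleGraph.comap_adj] using h
    exact ⟨ha, hw, hadj.reachable.trans hr⟩

lemma reachable_deleteEdges {G : SimpleGraph V} {x y : V}
    (hr : (G.deleteEdges {s(x, y)}).Reachable x y) {u w : V} (p : G.Walk u w) :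
    (G.deleteEdges {s(x, y)}).Reachable u w := by
  induction p with
  | nil => exact Reachable.refl _
  | @cons a b d h q ih =>
    refine Reachable.trans ?_ ih
    by_cases he : s(a, b) = s(x, y)
    · rw [Sym2.eq_iff] at he
      rcases he with ⟨rfl, rfl⟩ | ⟨rfl, rfl⟩
      · exact hr
      · exact hr.symm
    · exact Adj.reachable (by simp [h, he])

lemma exists_spanning_tree_aux [Fintype V] :
    ∀ (n : ℕ) (G : SimpleGraph V), G.edgeSet.ncard = n → G.Connected →
      ∃ T, T ≤ G ∧ T.IsTree := by
  intro n
  induction n using Nat.strong_induction_on with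
  | _ n ih =>
    intro G hcard hG
    by_cases hac : G.IsAcyclic
    · exact ⟨G, le_refl G, ⟨hG, hac⟩⟩
    · rw [IsAcyclic] at hac
      push_neg at hac
      obtain ⟨a, cyc, hcyc⟩ := hac
      cases cyc with
      | nil => exact absurd hcyc (by simp [Walk.isCycle_def])
      | @cons _ b _ hadj q =>
        have hmem : s(a, b) ∈ (Walk.cons hadj q).edges := by simp
        have hnb : ¬ G.IsBridge s(a, b) := by
          rw [isBridge_iff_adj_and_forall_cycle_notMem]
          push_neg
          exact ⟨a, Walk.cons hadj q, hcyc, hmem⟩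
          exact hadj
        rw [isBridge_iff] at hnb
        push_neg at hnb
        have hreach : (G.deleteEdges {s(a, b)}).Reachable a b := hnb
        set G' := G.deleteEdges {s(a, b)} with hG'
        have hconn : G'.Connected := by
          rw [connected_iff]
          refine ⟨fun u w => ?_, hG.nonempty⟩
          exact reachable_deleteEdges hreach ((hG u w).some)
        have hsub : G'.edgeSet = G.edgeSet \ {s(a, b)} := edgeSet_deleteEdges _
        have hlt : G'.edgeSet.ncard < n := by
          rw [← hcard, hsub]
          exact Set.ncard_lt_ncard (by
            refine ⟨Set.diff_subset, fun hss => ?_⟩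
            exact absurd (hss (by exact hadj : s(a,b) ∈ G.edgeSet)) (by simp)) G.edgeSet.toFinite
        obtain ⟨T, hT, hTt⟩ := ih _ hlt G' rfl hconn
        exact ⟨T, hT.trans (deleteEdges_le _), hTt⟩

lemma card_le_ncard_edges [Fintype V] (G : SimpleGraph V) (hG : G.Connected) :
    Fintype.card V ≤ G.edgeSet.ncard + 1 := by
  classical
  obtain ⟨T, hT, hTt⟩ := exists_spanning_tree_aux G.edgeSet.ncard G rfl hG
  haveI : Fintype T.edgeSet := Fintype.ofFinite _
  have h1 : T.edgeFinset.card + 1 = Fintype.card V := hTt.card_edgeFinset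
  have h2 : T.edgeSet.ncard = T.edgeFinset.card := by
    rw [Set.ncard_eq_toFinset_card']
    rfl
  have h3 : T.edgeSet.ncard ≤ G.edgeSet.ncard :=
    Set.ncard_le_ncard (edgeSet_mono hT) G.edgeSet.toFinite
  omega

lemma mc_lower [Fintype V] (G : SimpleGraph V) (hG : G.Connected)
    (h2 : 2 ≤ Fintype.card V) :
    ∃ c : Sym2 V → ℕ, IsMCColoring G c ∧
      (c '' G.edgeSet).ncard = G.edgeSet.ncard + 2 - Fintype.card V := by
  classical
  obtain ⟨T, hT, hTt⟩ := exists_spanning_tree_aux G.edgeSet.ncard G rfl hG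
  obtain ⟨enc, henc⟩ := (countable_iff_exists_injective (Sym2 V)).mp inferInstance
  set c : Sym2 V → ℕ := fun e => if e ∈ T.edgeSet then 0 else enc e + 1 with hc
  haveI : Fintype T.edgeSet := Fintype.ofFinite _
  have hcardT : T.edgeFinset.card + 1 = Fintype.card V := hTt.card_edgeFinset
  have hncT : T.edgeSet.ncard = T.edgeFinset.card := by
    rw [Set.ncard_eq_toFinset_card']
    rfl
  have hsubset : T.edgeSet ⊆ G.edgeSet := edgeSet_mono hT
  have hle : T.edgeSet.ncard ≤ G.edgeSet.ncard :=
    Set.ncard_le_ncard hsubset G.edgeSet.toFinite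
  obtain ⟨u₀, w₀, huw⟩ := Fintype.exists_pair_of_one_lt_card (α := V) (by omega)
  have hTedge : ∃ e₀ ∈ T.edgeSet, True := by
    obtain ⟨p⟩ := hTt.isConnected.preconnected u₀ w₀
    cases p with
    | nil => exact absurd rfl huw
    | cons h q => exact ⟨_, (T.mem_edgeSet).mpr h, trivial⟩
  obtain ⟨e₀, he₀, -⟩ := hTedge
  refine ⟨c, ?_, ?_⟩
  · intro u w
    obtain ⟨p₀⟩ := hTt.isConnected.preconnected u w
    refine ⟨(p₀.toPath : T.Walk u w).mapLe hT, (Walk.mapLe_isPath hT).mpr p₀.toPath.2, 0, ?_⟩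
    intro e he
    have : e ∈ (p₀.toPath : T.Walk u w).edges := by
      simpa [Walk.edges_map, Walk.edges_mapLe_eq_edges, Sym2.map_id'] using he
    have : e ∈ T.edgeSet := (p₀.toPath : T.Walk u w).edges_subset_edgeSet this
    simp [hc, this]
  · have himg : c '' G.edgeSet
        = insert 0 ((fun e => enc e + 1) '' (G.edgeSet \ T.edgeSet)) := by
      ext m
      constructor
      · rintro ⟨e, he, rfl⟩
        by_cases h : e ∈ T.edgeSet
        · simp [hc, h]
        · exact Set.mem_insert_of_mem _ ⟨e, ⟨he, h⟩, by simp [hc, h]⟩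
      · rintro (rfl | ⟨e, ⟨he, hne⟩, rfl⟩)
        · exact ⟨e₀, hsubset he₀, by simp [hc, he₀]⟩
        · exact ⟨e, he, by simp [hc, hne]⟩
    rw [himg]
    have hfin : ((fun e => enc e + 1) '' (G.edgeSet \ T.edgeSet)).Finite :=
      ((G.edgeSet.toFinite.diff)).image _
    rw [Set.ncard_insert_of_notMem (by rintro ⟨e, -, h⟩; exact Nat.succ_ne_zero _ h) hfin]
    rw [Set.ncard_image_of_injective _ (fun a b hab => henc (by omega))]
    rw [Set.ncard_diff hsubset (Set.toFinite _)]
    omega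

lemma mc_upper [Fintype V] (G : SimpleGraph V) (hG : G.Connected)
    (hn : 3 < Fintype.card V) {v : V}
    (hv : ¬ (G.induce ({v}ᶜ : Set V)).Connected)
    (c : Sym2 V → ℕ) (hc : IsMCColoring G c) :
    (c '' G.edgeSet).ncard + Fintype.card V ≤ G.edgeSet.ncard + 2 := by
  classical
  set W : Set V := ({v}ᶜ : Set V) with hW
  have hmemW : ∀ u : V, u ∈ W ↔ u ≠ v := fun u => Set.mem_compl_singleton_iff
  have hWne : Nonempty ↥W := by
    obtain ⟨u, hu⟩ := Fintype.exists_ne_of_one_lt_card (by omega) v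
    exact ⟨⟨u, (hmemW u).mpr hu⟩⟩
  haveI := hWne
  have hpre : ¬ (G.induce W).Preconnected := fun h => hv ⟨h⟩
  rw [Preconnected] at hpre
  push_neg at hpre
  obtain ⟨x, y, hxy⟩ := hpre
  set Gv := G.induce W with hGv
  set A : Finset V := univ.filter (fun u => ∃ h : u ∈ W, Gv.Reachable ⟨u, h⟩ x) with hA
  set B : Finset V := univ.filter (fun u => ∃ h : u ∈ W, ¬ Gv.Reachable ⟨u, h⟩ x) with hB
  have hvA : v ∉ A := by simp [hA, hmemW]
  have hvB : v ∉ B := by simp [hB, hmemW]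
  have hAne : (x : V) ∈ A := by
    simp only [hA, mem_filter, mem_univ, true_and]
    exact ⟨x.2, by rw [Subtype.coe_eta]⟩
  have hBne : (y : V) ∈ B := by
    simp only [hB, mem_filter, mem_univ, true_and]
    refine ⟨y.2, fun h => hxy ?_⟩
    rw [Subtype.coe_eta] at h
    exact h.symm
  have hdisj : Disjoint A B := by
    rw [Finset.disjoint_left]
    rintro u hu hu'
    simp only [hA, hB, mem_filter] at hu hu'
    obtain ⟨-, h1, h2⟩ := hu
    obtain ⟨-, h3, h4⟩ := hu'
    exact h4 h2
  have hunion : A ∪ B = univ.erase v := by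
    ext u
    simp only [hA, hB, mem_union, mem_filter, mem_univ, true_and, mem_erase, and_true]
    constructor
    · rintro (⟨h, -⟩ | ⟨h, -⟩) <;> exact (hmemW u).mp h
    · intro h
      by_cases hr : Gv.Reachable ⟨u, (hmemW u).mpr h⟩ x
      · exact Or.inl ⟨_, hr⟩
      · exact Or.inr ⟨_, hr⟩
  have hcardAB : A.card + B.card = Fintype.card V - 1 := by
    rw [← Finset.card_union_of_disjoint hdisj, hunion, Finset.card_erase_of_mem (mem_univ v),
      Finset.card_univ]
  set H : ℕ → SimpleGraph V := fun k => G.deleteEdges {e | c e ≠ k} with hH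
  have hHadj : ∀ k a b, (H k).Adj a b ↔ G.Adj a b ∧ c s(a, b) = k := by
    intro k a b; simp [hH]
  set S : ℕ → Finset V := fun k => univ.filter (fun u => u ≠ v ∧ (H k).Reachable u v) with hS
  set E : Finset (Sym2 V) := G.edgeFinset with hE
  set colors : Finset ℕ := E.image c with hcolors
  have himgcard : (c '' G.edgeSet).ncard = colors.card := by
    have : c '' G.edgeSet = ↑colors := by
      rw [hcolors, Finset.coe_image, hE, coe_edgeFinset]
    rw [this, Set.ncard_coe_finset]
  have hm : G.edgeSet.ncard = E.card := by
    rw [hE, Set.ncard_eq_toFinset_card', edgeFinset]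
  set ec : ℕ → ℕ := fun k => (E.filter (fun e => c e = k)).card with hec
  have hsum : ∑ k ∈ colors, ec k = E.card := by
    rw [hcolors]
    exact (Finset.card_eq_sum_card_fiberwise (fun e he => Finset.mem_image_of_mem c he)).symm
  have hec1 : ∀ k ∈ colors, 1 ≤ ec k := by
    intro k hk
    rw [hcolors, Finset.mem_image] at hk
    obtain ⟨e, he, rfl⟩ := hk
    exact Finset.card_pos.mpr ⟨e, Finset.mem_filter.mpr ⟨he, rfl⟩⟩
  have hSk : ∀ k, (S k).Nonempty → (S k).card ≤ ec k := by
    intro k hk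
    set C : Set V := {u | (H k).Reachable u v} with hC
    haveI : Fintype ↥C := (C.toFinite).fintype
    have hvC : v ∈ C := Reachable.refl v
    have hconn : ((H k).induce C).Connected := by
      rw [connected_iff]
      refine ⟨?_, ⟨⟨v, hvC⟩⟩⟩
      rintro ⟨p, hp⟩ ⟨q, hq⟩
      obtain ⟨w⟩ := (hp.trans hq.symm : (H k).Reachable p q)
      have hsup : ∀ z ∈ w.support, z ∈ C := by
        intro z hz
        exact ((w.dropUntil z hz).reachable.trans hq : (H k).Reachable z v)
      obtain ⟨h1, h2, hr⟩ := reachable_induce_of_walk w hsup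
      exact hr
    have hcardC : Fintype.card ↥C ≤ ((H k).induce C).edgeSet.ncard + 1 :=
      card_le_ncard_edges _ hconn
    have hvS : v ∉ S k := by simp [hS]
    have hCS : C.toFinset = insert v (S k) := by
      ext u
      simp only [Set.mem_toFinset, hC, Set.mem_setOf_eq, Finset.mem_insert, hS,
        Finset.mem_filter, Finset.mem_univ, true_and]
      constructor
      · intro h
        by_cases huv : u = v
        · exact Or.inl huv
        · exact Or.inr ⟨huv, h⟩
      · rintro (rfl | ⟨-, h⟩)
        · exact Reachable.refl _
        · exact h
    have hcard2 : Fintype.card ↥C = (S k).card + 1 := by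
      rw [← Set.toFinset_card, hCS, Finset.card_insert_of_notMem hvS]
    have hinj : Function.Injective (Sym2.map (Subtype.val : ↥C → V)) :=
      Sym2.map.injective Subtype.val_injective
    have himg : Sym2.map (Subtype.val : ↥C → V) '' ((H k).induce C).edgeSet
        ⊆ ↑(E.filter (fun e => c e = k)) := by
      rintro e ⟨e', he', rfl⟩
      induction e' using Sym2.ind with
      | _ a b =>
        rw [mem_edgeSet] at he'
        have : (H k).Adj a.1 b.1 := he'
        rw [hHadj] at this
        simp only [Sym2.map_pair_eq, Finset.coe_filter, Set.mem_setOf_eq]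
        exact ⟨by rw [hE, mem_edgeFinset]; exact this.1, this.2⟩
    have hEC : ((H k).induce C).edgeSet.ncard ≤ ec k := by
      calc ((H k).induce C).edgeSet.ncard
          = (Sym2.map (Subtype.val : ↥C → V) '' ((H k).induce C).edgeSet).ncard :=
            (Set.ncard_image_of_injective _ hinj).symm
        _ ≤ (↑(E.filter (fun e => c e = k)) : Set (Sym2 V)).ncard :=
            Set.ncard_le_ncard himg (Finset.finite_toSet _)
        _ = ec k := by rw [Set.ncard_coe_finset]
    omega
  have cover : ∀ a ∈ A, ∀ b ∈ B, ∃ k ∈ colors, a ∈ S k ∩ A ∧ b ∈ S k ∩ B := by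
    intro a ha b hb
    have hav : a ≠ v := by
      intro h; rw [h] at ha; exact hvA ha
    have hbv : b ≠ v := by
      intro h; rw [h] at hb; exact hvB hb
    have hab : a ≠ b := fun h => Finset.disjoint_left.mp hdisj ha (h ▸ hb)
    obtain ⟨p, hp, k, hk⟩ := hc a b
    have hvsup : v ∈ p.support := by
      by_contra hvp
      have hsup : ∀ z ∈ p.support, z ∈ W := by
        intro z hz
        rw [hmemW]
        rintro rfl
        exact hvp hz
      obtain ⟨h1, h2, hr⟩ := reachable_induce_of_walk p hsup
      simp only [hA, mem_filter] at ha
      simp only [hB, mem_filter] at hb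
      obtain ⟨-, ha1, ha2⟩ := ha
      obtain ⟨-, hb1, hb2⟩ := hb
      exact hb2 (hr.symm.trans ha2)
    have hkcol : k ∈ colors := by
      cases p with
      | nil => exact absurd rfl hab
      | @cons _ z _ hadj q =>
        have he : s(a, z) ∈ (Walk.cons hadj q).edges := by simp
        rw [hcolors, Finset.mem_image]
        exact ⟨s(a, z), by rw [hE, mem_edgeFinset]; exact hadj, hk _ he⟩
    have htrans : ∀ {u₁ u₂ : V} (q : G.Walk u₁ u₂),
        (∀ e ∈ q.edges, e ∈ p.edges) → (H k).Reachable u₁ u₂ := by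
      intro u₁ u₂ q hq
      refine ⟨q.transfer (H k) ?_⟩
      intro e he
      rw [hH, edgeSet_deleteEdges]
      refine ⟨q.edges_subset_edgeSet he, ?_⟩
      simp only [Set.mem_setOf_eq, not_not]
      exact hk e (hq e he)
    have hra : (H k).Reachable a v :=
      htrans (p.takeUntil v hvsup) (fun e he => p.edges_takeUntil_subset hvsup he)
    have hrb : (H k).Reachable v b :=
      htrans (p.dropUntil v hvsup) (fun e he => p.edges_dropUntil_subset hvsup he)
    refine ⟨k, hkcol, Finset.mem_inter.mpr ⟨?_, ha⟩, Finset.mem_inter.mpr ⟨?_, hb⟩⟩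
    · simp only [hS, mem_filter, mem_univ, true_and]; exact ⟨hav, hra⟩
    · simp only [hS, mem_filter, mem_univ, true_and]; exact ⟨hbv, hrb.symm⟩
  -- final counting
  set K : Finset ℕ := colors.filter (fun k => (S k).Nonempty) with hK
  have hKsub : K ⊆ colors := Finset.filter_subset _ _
  have hadd : ∀ k, (S k ∩ A).card + (S k ∩ B).card = (S k).card := by
    intro k
    have hsub : S k ⊆ A ∪ B := by
      intro u hu
      rw [hunion, Finset.mem_erase]
      exact ⟨(Finset.mem_filter.mp hu).2.1, Finset.mem_univ u⟩
    rw [← Finset.card_union_of_disjoint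
      (hdisj.mono Finset.inter_subset_right Finset.inter_subset_right),
      ← Finset.inter_union_distrib_left, Finset.inter_eq_left.mpr hsub]
  have f1 : A.card * B.card ≤ ∑ k ∈ K, (S k ∩ A).card * (S k ∩ B).card := by
    have hsub : A ×ˢ B ⊆ K.biUnion (fun k => (S k ∩ A) ×ˢ (S k ∩ B)) := by
      rintro ⟨a, b⟩ hab
      rw [Finset.mem_product] at hab
      obtain ⟨k, hk, h1, h2⟩ := cover a hab.1 b hab.2
      refine Finset.mem_biUnion.mpr ⟨k, ?_, Finset.mem_product.mpr ⟨h1, h2⟩⟩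
      rw [hK, Finset.mem_filter]
      exact ⟨hk, ⟨a, (Finset.mem_inter.mp h1).1⟩⟩
    calc A.card * B.card = (A ×ˢ B).card := (Finset.card_product _ _).symm
      _ ≤ (K.biUnion fun k => (S k ∩ A) ×ˢ (S k ∩ B)).card := Finset.card_le_card hsub
      _ ≤ ∑ k ∈ K, ((S k ∩ A) ×ˢ (S k ∩ B)).card := Finset.card_biUnion_le
      _ = ∑ k ∈ K, (S k ∩ A).card * (S k ∩ B).card := by simp [Finset.card_product]
  have hα : 1 ≤ A.card := Finset.card_pos.mpr ⟨_, hAne⟩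
  have hβ : 1 ≤ B.card := Finset.card_pos.mpr ⟨_, hBne⟩
  have hmul : ∀ k ∈ K,
      ((S k ∩ A).card : ℤ) * ((S k ∩ B).card : ℤ) * ((A.card : ℤ) + (B.card : ℤ) - 1)
      ≤ (((S k).card : ℤ) - 1) * ((A.card : ℤ) * (B.card : ℤ)) := by
    intro k hk
    have h1 : (S k ∩ A).card ≤ A.card := Finset.card_le_card Finset.inter_subset_right
    have h2 : (S k ∩ B).card ≤ B.card := Finset.card_le_card Finset.inter_subset_right
    have h3 : 1 ≤ (S k).card := Finset.card_pos.mpr ((Finset.mem_filter.mp hk).2)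
    have h4 := hadd k
    have he : ((S k ∩ A).card : ℤ) + ((S k ∩ B).card : ℤ) = ((S k).card : ℤ) := by
      exact_mod_cast h4
    have := ineq ((S k ∩ A).card : ℤ) ((S k ∩ B).card : ℤ) (A.card : ℤ) (B.card : ℤ)
      (Int.natCast_nonneg _) (Int.natCast_nonneg _) (by exact_mod_cast h1) (by exact_mod_cast h2)
      (by rw [he]; exact_mod_cast h3) (by exact_mod_cast hα) (by exact_mod_cast hβ)
    rw [he] at this
    exact this
  have hposαβ : 0 < (A.card : ℤ) * (B.card : ℤ) := by
    have : 0 < A.card * B.card := Nat.mul_pos hα hβ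
    exact_mod_cast this
  have f3 : (A.card : ℤ) + (B.card : ℤ) - 1 ≤ ∑ k ∈ K, (((S k).card : ℤ) - 1) := by
    have step : ((A.card : ℤ) + (B.card : ℤ) - 1) * ((A.card : ℤ) * (B.card : ℤ))
        ≤ (∑ k ∈ K, (((S k).card : ℤ) - 1)) * ((A.card : ℤ) * (B.card : ℤ)) := by
      calc ((A.card : ℤ) + (B.card : ℤ) - 1) * ((A.card : ℤ) * (B.card : ℤ))
          = ((A.card : ℤ) * (B.card : ℤ)) * ((A.card : ℤ) + (B.card : ℤ) - 1) := by ring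
        _ ≤ (∑ k ∈ K, ((S k ∩ A).card : ℤ) * ((S k ∩ B).card : ℤ))
              * ((A.card : ℤ) + (B.card : ℤ) - 1) := by
            refine mul_le_mul_of_nonneg_right ?_ (by
              have : (1:ℤ) ≤ (A.card : ℤ) := by exact_mod_cast hα
              have h' : (1:ℤ) ≤ (B.card : ℤ) := by exact_mod_cast hβ
              linarith)
            exact_mod_cast f1
        _ = ∑ k ∈ K, ((S k ∩ A).card : ℤ) * ((S k ∩ B).card : ℤ)
              * ((A.card : ℤ) + (B.card : ℤ) - 1) := Finset.sum_mul _ _ _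
        _ ≤ ∑ k ∈ K, (((S k).card : ℤ) - 1) * ((A.card : ℤ) * (B.card : ℤ)) :=
            Finset.sum_le_sum hmul
        _ = (∑ k ∈ K, (((S k).card : ℤ) - 1)) * ((A.card : ℤ) * (B.card : ℤ)) :=
            (Finset.sum_mul _ _ _).symm
    exact le_of_mul_le_mul_right step hposαβ
  have f3' : (A.card : ℤ) + (B.card : ℤ) - 1 + K.card ≤ ∑ k ∈ K, ((S k).card : ℤ) := by
    have hsplit : ∑ k ∈ K, (((S k).card : ℤ) - 1)
        = (∑ k ∈ K, ((S k).card : ℤ)) - K.card := by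
      rw [Finset.sum_sub_distrib, Finset.sum_const, nsmul_eq_mul, mul_one]
    linarith
  have f4 : ∑ k ∈ K, ((S k).card : ℤ) ≤ ∑ k ∈ K, (ec k : ℤ) :=
    Finset.sum_le_sum (fun k hk => by
      exact_mod_cast hSk k (Finset.mem_filter.mp hk).2)
  have f5 : (colors.card : ℤ) - K.card ≤ ∑ k ∈ colors \ K, (ec k : ℤ) := by
    have h1 : ∀ k ∈ colors \ K, (1:ℤ) ≤ ec k := fun k hk => by
      exact_mod_cast hec1 k (Finset.mem_sdiff.mp hk).1
    have h2 : (colors \ K).card = colors.card - K.card := Finset.card_sdiff_of_subset hKsub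
    have h3 : K.card ≤ colors.card := Finset.card_le_card hKsub
    calc (colors.card : ℤ) - K.card = ((colors \ K).card : ℤ) := by
          rw [h2]; push_cast [h3]; ring
      _ = ∑ k ∈ colors \ K, (1:ℤ) := by rw [Finset.sum_const, nsmul_eq_mul, mul_one]
      _ ≤ _ := Finset.sum_le_sum h1
  have f6 : ∑ k ∈ colors \ K, (ec k : ℤ) + ∑ k ∈ K, (ec k : ℤ) = (E.card : ℤ) := by
    rw [Finset.sum_sdiff hKsub]
    exact_mod_cast congrArg (Nat.cast : ℕ → ℤ) hsum
  have hcastAB : (A.card : ℤ) + (B.card : ℤ) = (Fintype.card V : ℤ) - 1 := by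
    have h1 : A.card + B.card + 1 = Fintype.card V := by omega
    have := congrArg (Nat.cast : ℕ → ℤ) h1
    push_cast at this
    linarith
  have hfin : (colors.card : ℤ) + (Fintype.card V : ℤ) ≤ (E.card : ℤ) + 2 := by
    linarith
  rw [himgcard, hm]
  exact_mod_cast hfin

end MCAux

/-- A connected graph with `n > 3` vertices and `m` edges having a cut vertex
satisfies `mc(G) = m - n + 2`. -/
theorem stmt_14 {V : Type*} [Fintype V] (G : SimpleGraph V) (hG : G.Connected)
    (hn : 3 < Fintype.card V)
    (hcut : ∃ v : V, ¬ (G.induce ({v}ᶜ : Set V)).Connected) :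
    (mcNumber G : ℤ) = (G.edgeSet.ncard : ℤ) - Fintype.card V + 2 := by
  classical
  obtain ⟨v, hv⟩ := hcut
  obtain ⟨c₀, hc₀, hcard₀⟩ := MCAux.mc_lower G hG (by omega)
  set Sset := {k | ∃ c : Sym2 V → ℕ, IsMCColoring G c ∧ (c '' G.edgeSet).ncard = k} with hSset
  have hub : ∀ k ∈ Sset, k ≤ G.edgeSet.ncard + 2 - Fintype.card V := by
    rintro k ⟨c, hcc, rfl⟩
    have := MCAux.mc_upper G hG hn hv c hcc
    omega
  have hmem : G.edgeSet.ncard + 2 - Fintype.card V ∈ Sset := ⟨c₀, hc₀, hcard₀⟩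
  have hmc : mcNumber G = G.edgeSet.ncard + 2 - Fintype.card V := by
    apply le_antisymm
    · exact csSup_le ⟨_, hmem⟩ hub
    · exact le_csSup ⟨G.edgeSet.ncard + 2 - Fintype.card V, hub⟩ hmem
  rw [mcNumber] at hmc
  rw [show mcNumber G = G.edgeSet.ncard + 2 - Fintype.card V from by rw [mcNumber]; exact hmc]
  have hml := MCAux.card_le_ncard_edges G hG
  omega
end

section
/- Every connected graph G with n vertices and m edges satisfies mc(G) ≤ m - n + χ(G), where χ(G) is the chromatic number of G. -/
open SimpleGraph Finset

open Classical in
/-- A choice of "root" in each connected component of `H`: `f u` for a chosen `u ∈ S`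
in that component (junk otherwise). -/
noncomputable def rootFn {V : Type*} (H : SimpleGraph V) (S : Finset V) (f : V → V) (v : V) : V :=
  if h : ∃ u, u ∈ S ∧ H.connectedComponentMk u = H.connectedComponentMk v then f h.choose else v

lemma rootFn_congr {V : Type*} (H : SimpleGraph V) (S : Finset V) (f : V → V) {a b u : V}
    (hu : u ∈ S) (hua : H.Reachable u a) (hab : H.Reachable a b) :
    rootFn H S f a = rootFn H S f b := by
  have hb : ∃ w, w ∈ S ∧ H.connectedComponentMk w = H.connectedComponentMk b :=
    ⟨u, hu, SimpleGraph.ConnectedComponent.sound (hua.trans hab)⟩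
  unfold rootFn
  rw [SimpleGraph.ConnectedComponent.sound hab]
  simp only [dif_pos hb]

lemma rootFn_spec {V : Type*} (H : SimpleGraph V) (S : Finset V) (f : V → V) {v : V}
    (hv : v ∈ S) : ∃ u, u ∈ S ∧ H.Reachable u v ∧ rootFn H S f v = f u := by
  have h : ∃ u, u ∈ S ∧ H.connectedComponentMk u = H.connectedComponentMk v := ⟨v, hv, rfl⟩
  exact ⟨h.choose, h.choose_spec.1, SimpleGraph.ConnectedComponent.exact h.choose_spec.2,
    by unfold rootFn; rw [dif_pos h]⟩

/-- Key counting lemma: if every vertex of `S` is joined in `H` to its "representative"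
`f v ≠ v`, representatives are idempotent, and vertices with equal representatives are
never adjacent in `G ≥ H`, then `|S| + 1 ≤ |E(H)|`. -/
lemma hard_bound {V : Type*} [Fintype V] (G H : SimpleGraph V) [Fintype H.edgeSet]
    (hHG : H ≤ G) (f : V → V) (hff : ∀ v, f (f v) = f v)
    (hind : ∀ u w : V, f u = f w → ¬ G.Adj u w)
    (S : Finset V) (hS : ∀ v ∈ S, v ≠ f v ∧ H.Reachable v (f v)) (hne : S.Nonempty) :
    S.card + 1 ≤ H.edgeFinset.card := by
  classical
  have hfS : ∀ u : V, f u ∉ S := by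
    intro u hu
    exact (hS _ hu).1 ((hff u).symm)
  set r : V → V := rootFn H S f with hr
  have hreach : ∀ v ∈ S, H.Reachable v (r v) := by
    intro v hv
    obtain ⟨u, huS, hu, hru⟩ := rootFn_spec H S f hv
    rw [hr, hru]
    exact hu.symm.trans (hS u huS).2
  have hrnotS : ∀ v ∈ S, r v ∉ S := by
    intro v hv
    obtain ⟨u, huS, hu, hru⟩ := rootFn_spec H S f hv
    rw [hr, hru]; exact hfS u
  have hrf : ∀ v ∈ S, f (r v) = r v := by
    intro v hv
    obtain ⟨u, huS, hu, hru⟩ := rootFn_spec H S f hv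
    rw [hr, hru, hff]
  have hrcongr : ∀ {a b u : V}, u ∈ S → H.Reachable u a → H.Reachable a b → r a = r b :=
    fun hu hua hab => rootFn_congr H S f hu hua hab
  have step : ∀ a b : V, H.Reachable a b → a ≠ b →
      ∃ y, H.Adj a y ∧ H.dist y b + 1 = H.dist a b := by
    intro a b hrab hab
    obtain ⟨p, hp⟩ := hrab.exists_walk_length_eq_dist
    obtain ⟨y, hadj, q, rfl⟩ := SimpleGraph.Walk.exists_eq_cons_of_ne hab p
    have h1 : H.dist y b ≤ q.length := SimpleGraph.dist_le q
    obtain ⟨q', hq'⟩ := q.reachable.exists_walk_length_eq_dist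
    have h2 : H.dist a b ≤ q'.length + 1 := by
      simpa [SimpleGraph.Walk.length_cons] using
        SimpleGraph.dist_le (SimpleGraph.Walk.cons hadj q')
    simp only [SimpleGraph.Walk.length_cons] at hp
    exact ⟨y, hadj, by omega⟩
  have hdpos : ∀ v ∈ S, 1 ≤ H.dist v (r v) := by
    intro v hv
    have hne' : v ≠ r v := fun h => (hrnotS v hv) (h ▸ hv)
    have h0 : H.dist v (r v) ≠ 0 := fun h => hne' ((hreach v hv).dist_eq_zero_iff.mp h)
    omega
  -- the "next vertex along a shortest path to the root" function
  set N : V → V := fun v =>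
    if h : ∃ w, H.Adj v w ∧ H.dist w (r v) + 1 = H.dist v (r v) then h.choose else v with hN
  have hNspec : ∀ v ∈ S, H.Adj v (N v) ∧ H.dist (N v) (r v) + 1 = H.dist v (r v) := by
    intro v hv
    have hne' : v ≠ r v := fun h => (hrnotS v hv) (h ▸ hv)
    have hex : ∃ w, H.Adj v w ∧ H.dist w (r v) + 1 = H.dist v (r v) :=
      step v (r v) (hreach v hv) hne'
    rw [hN]
    simp only [dif_pos hex]
    exact hex.choose_spec
  -- construct a "missed" edge
  obtain ⟨estar, hestarE, hmiss⟩ :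
      ∃ e ∈ H.edgeFinset, ∀ v ∈ S, s(v, N v) ≠ e := by
    by_cases hA : ∃ v₁ ∈ S, H.dist v₁ (r v₁) = 1
    · -- some vertex is adjacent to its root ρ; then f v₁ ≠ ρ is a second root
      obtain ⟨v₁, hv₁S, hd1⟩ := hA
      have h1 := hNspec v₁ hv₁S
      have hNv : N v₁ = r v₁ := by
        have h0 : H.dist (N v₁) (r v₁) = 0 := by omega
        have hre : H.Reachable (N v₁) (r v₁) :=
          (h1.1.symm.reachable).trans (hreach v₁ hv₁S)
        exact hre.dist_eq_zero_iff.mp h0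
      have hadj : H.Adj v₁ (r v₁) := hNv ▸ h1.1
      have hρ₂ne : f v₁ ≠ r v₁ := by
        intro he
        have : f v₁ = f (r v₁) := by rw [hrf v₁ hv₁S, he]
        exact hind v₁ (r v₁) this (hHG hadj)
      have hρ₂reach : H.Reachable (f v₁) (r v₁) :=
        ((hS v₁ hv₁S).2.symm).trans hadj.reachable
      obtain ⟨y, hy, hyd⟩ := step (f v₁) (r v₁) hρ₂reach hρ₂ne
      refine ⟨s(f v₁, y), SimpleGraph.mem_edgeFinset.mpr hy, ?_⟩
      intro v hv heq
      rw [Sym2.eq_iff] at heq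
      rcases heq with ⟨h1', h2'⟩ | ⟨h1', h2'⟩
      · exact hfS v₁ (h1' ▸ hv)
      · -- v = y, N v = f v₁
        have hNe := (hNspec v hv).2
        have hadjv : H.Adj v (f v₁) := h2' ▸ (hNspec v hv).1
        have hrv : r v = r v₁ := hrcongr hv (SimpleGraph.Reachable.refl v)
          (hadjv.reachable.trans (hS v₁ hv₁S).2.symm)
        rw [h2', hrv] at hNe
        rw [h1'] at *
        omega
    · push_neg at hA
      obtain ⟨vs, hvsS, hmin⟩ := S.exists_min_image (fun v => H.dist v (r v)) hne
      have hd2 : 2 ≤ H.dist vs (r vs) := by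
        have := hdpos vs hvsS
        have := hA vs hvsS
        omega
      have h1 := hNspec vs hvsS
      have hwreach : H.Reachable (N vs) (r vs) :=
        (h1.1.symm.reachable).trans (hreach vs hvsS)
      have hwne : N vs ≠ r vs := by
        intro h
        rw [h, SimpleGraph.dist_self] at h1
        omega
      have hwS : N vs ∉ S := by
        intro hwS'
        have hrw : r (N vs) = r vs := hrcongr hvsS (h1.1.reachable) (h1.1.symm.reachable)
        have := hmin (N vs) hwS'
        rw [hrw] at this
        omega
      obtain ⟨x, hx, hxd⟩ := step (N vs) (r vs) hwreach hwne
      refine ⟨s(N vs, x), SimpleGraph.mem_edgeFinset.mpr hx, ?_⟩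
      intro v hv heq
      rw [Sym2.eq_iff] at heq
      rcases heq with ⟨h1', h2'⟩ | ⟨h1', h2'⟩
      · exact hwS (h1' ▸ hv)
      · -- v = x, N v = N vs
        have hadjv : H.Adj v (N vs) := h2' ▸ (hNspec v hv).1
        have hrv : r v = r vs := hrcongr hv (SimpleGraph.Reachable.refl v)
          (hadjv.reachable.trans (h1.1.symm.reachable))
        have := hmin v hv
        rw [hrv] at this
        rw [h1'] at this
        omega
  -- now count via the injection v ↦ s(v, N v)
  have hinj : Set.InjOn (fun v => s(v, N v)) ↑S := by
    intro u hu v hv heq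
    simp only [Finset.mem_coe] at hu hv
    simp only at heq
    rw [Sym2.eq_iff] at heq
    rcases heq with ⟨h1, h2⟩ | ⟨h1, h2⟩
    · exact h1
    · exfalso
      have hadj : H.Adj v u := by rw [h1]; exact (hNspec v hv).1
      have hru : r u = r v := hrcongr hu (SimpleGraph.Reachable.refl u) hadj.symm.reachable
      have e1 := (hNspec u hu).2
      have e2 := (hNspec v hv).2
      rw [h2, hru] at e1
      rw [← h1] at e2
      omega
  have hsub : ∀ v ∈ S, s(v, N v) ∈ H.edgeFinset.erase estar := fun v hv =>
    Finset.mem_erase.mpr ⟨hmiss v hv, SimpleGraph.mem_edgeFinset.mpr ((hNspec v hv).1)⟩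
  have hcard := Finset.card_le_card_of_injOn _ hsub hinj
  rw [Finset.card_erase_of_mem hestarE] at hcard
  have hpos : 1 ≤ H.edgeFinset.card := Finset.card_pos.mpr ⟨estar, hestarE⟩
  omega

/-- The main estimate for a single MC-coloring. -/
lemma key_bound {V : Type*} [Fintype V] [Fintype (Sym2 V)] (G : SimpleGraph V)
    [Fintype G.edgeSet] (hG : G.Connected) (χ : ℕ) (hcol : G.Colorable χ)
    (c : Sym2 V → ℕ) (hc : IsMCColoring G c) :
    (G.edgeFinset.image c).card + Fintype.card V ≤ G.edgeFinset.card + χ := by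
  classical
  haveI : Nonempty V := hG.nonempty
  obtain ⟨C⟩ := hcol
  set π : V → ℕ := fun v => (C v : ℕ) with hπ
  set f : V → V := fun v => Function.invFun π (π v) with hfdef
  have hπf : ∀ v, π (f v) = π v := fun v => Function.invFun_eq ⟨v, rfl⟩
  have hπeq : ∀ u w : V, π u = π w → f u = f w := by
    intro u w h
    rw [hfdef]
    simp only [h]
  have hff : ∀ v, f (f v) = f v := by
    intro v
    exact hπeq _ _ (hπf v)
  have hind : ∀ u w : V, f u = f w → ¬ G.Adj u w := by
    intro u w h hadj
    have hπuw : π u = π w := by rw [← hπf u, ← hπf w, h]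
    exact C.valid hadj (Fin.val_injective hπuw)
  set S : Finset V := Finset.univ.filter (fun v => v ≠ f v) with hSdef
  have hn : Fintype.card V ≤ S.card + χ := by
    have h1 : (Finset.univ.filter (fun v => v = f v)).card ≤ χ := by
      have hmap : ∀ a ∈ Finset.univ.filter (fun v => v = f v), C a ∈ (Finset.univ : Finset (Fin χ)) :=
        fun a _ => Finset.mem_univ _
      have hinj : Set.InjOn (fun v => C v) ↑(Finset.univ.filter (fun v => v = f v)) := by
        intro a ha b hb hCab
        simp only [Finset.coe_filter, Set.mem_setOf_eq] at ha hb
        have hπab : π a = π b := by rw [hπ]; simp only [hCab]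
        calc a = f a := ha.2
          _ = f b := hπeq _ _ hπab
          _ = b := hb.2.symm
      have := Finset.card_le_card_of_injOn _ hmap hinj
      simpa using this
    have h2 := Finset.card_filter_add_card_filter_not
      (s := (Finset.univ : Finset V)) (p := fun v => v = f v)
    have h3 : Finset.univ.filter (fun v => ¬ v = f v) = S := rfl
    rw [h3, Finset.card_univ] at h2
    omega
  obtain ⟨P, hP⟩ := Classical.axiomOfChoice (fun v : V => hc v (f v))
  have hPpath : ∀ v, (P v).IsPath := fun v => (hP v).1
  obtain ⟨κ, hκ⟩ := Classical.axiomOfChoice (fun v : V => (hP v).2)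
  set K := G.edgeFinset.image c with hK
  have hκK : ∀ v ∈ S, κ v ∈ K := by
    intro v hv
    have hvne : v ≠ f v := by
      rw [hSdef] at hv
      exact (Finset.mem_filter.mp hv).2
    obtain ⟨w, hadj, q, hq⟩ := SimpleGraph.Walk.exists_eq_cons_of_ne hvne (P v)
    have he : s(v, w) ∈ (P v).edges := by
      rw [hq, SimpleGraph.Walk.edges_cons]
      exact List.mem_cons_self
    exact Finset.mem_image.mpr ⟨s(v, w), SimpleGraph.mem_edgeFinset.mpr hadj, hκ v _ he⟩
  have hmS : S.card = ∑ k ∈ K, (S.filter (fun v => κ v = k)).card :=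
    Finset.card_eq_sum_card_fiberwise hκK
  have hmE : G.edgeFinset.card = ∑ k ∈ K, (G.edgeFinset.filter (fun e => c e = k)).card :=
    Finset.card_eq_sum_card_fiberwise (fun e he => Finset.mem_image_of_mem c he)
  have hper : ∀ k ∈ K, (S.filter (fun v => κ v = k)).card + 1
      ≤ (G.edgeFinset.filter (fun e => c e = k)).card := by
    intro k hk
    rcases (S.filter (fun v => κ v = k)).eq_empty_or_nonempty with hSk | hSk
    · rw [hSk]
      obtain ⟨e, he, hce⟩ := Finset.mem_image.mp hk
      simpa using Finset.card_pos.mpr ⟨e, Finset.mem_filter.mpr ⟨he, hce⟩⟩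
    · set H : SimpleGraph V :=
        { Adj := fun x y => G.Adj x y ∧ c s(x, y) = k
          symm := by
            constructor
            intro x y h
            exact ⟨h.1.symm, by rw [Sym2.eq_swap]; exact h.2⟩
          loopless := ⟨fun x h => G.loopless.irrefl x h.1⟩ } with hHdef
      haveI : Fintype H.edgeSet := Fintype.ofFinite _
      have hHG : H ≤ G := by intro x y h; exact h.1
      have hedge : H.edgeFinset = G.edgeFinset.filter (fun e => c e = k) := by
        ext e
        induction e with
        | _ x y =>
          simp only [SimpleGraph.mem_edgeFinset, Finset.mem_filter, SimpleGraph.mem_edgeSet]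
          exact Iff.rfl
      have hSsub : ∀ v ∈ S.filter (fun v => κ v = k), v ≠ f v ∧ H.Reachable v (f v) := by
        intro v hv
        rw [Finset.mem_filter] at hv
        have hvne : v ≠ f v := by
          have := hv.1
          rw [hSdef] at this
          exact (Finset.mem_filter.mp this).2
        refine ⟨hvne, ?_⟩
        have hT : ∀ e ∈ (P v).edges, e ∈ H.edgeSet := by
          intro e he
          have h1 : e ∈ G.edgeSet := (P v).edges_subset_edgeSet he
          have h2 : c e = k := by rw [hκ v e he, hv.2]
          induction e with
          | _ x y =>
            rw [SimpleGraph.mem_edgeSet] at h1 ⊢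
            exact ⟨h1, h2⟩
        exact ((P v).transfer H hT).reachable
      have := hard_bound G H hHG f hff hind (S.filter (fun v => κ v = k)) hSsub hSk
      rwa [hedge] at this
  have hsum : K.card + S.card ≤ G.edgeFinset.card := by
    rw [hmS, hmE]
    calc K.card + ∑ k ∈ K, (S.filter (fun v => κ v = k)).card
        = ∑ k ∈ K, ((S.filter (fun v => κ v = k)).card + 1) := by
          rw [Finset.sum_add_distrib, Finset.sum_const, smul_eq_mul, mul_one]
          omega
      _ ≤ ∑ k ∈ K, (G.edgeFinset.filter (fun e => c e = k)).card := Finset.sum_le_sum hper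
  omega

/-- Every connected graph with `n` vertices and `m` edges satisfies
`mc(G) ≤ m - n + χ(G)`. -/
theorem stmt_17 {V : Type*} [Fintype V] (G : SimpleGraph V) (hG : G.Connected)
    (χ : ℕ) (hχ : G.chromaticNumber = χ) :
    (mcNumber G : ℤ) ≤ (G.edgeSet.ncard : ℤ) - Fintype.card V + χ := by
  classical
  haveI : Fintype (Sym2 V) := Fintype.ofFinite _
  haveI : Fintype G.edgeSet := Fintype.ofFinite _
  have hcol : G.Colorable χ := by
    rw [← SimpleGraph.chromaticNumber_le_iff_colorable, hχ]
  have hTne : Set.Nonempty {k | ∃ c : Sym2 V → ℕ, IsMCColoring G c ∧ (c '' G.edgeSet).ncard = k} := by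
    refine ⟨_, fun _ => 0, ?_, rfl⟩
    intro u v
    obtain ⟨w⟩ := hG.preconnected u v
    exact ⟨w.bypass, w.bypass_isPath, 0, fun e _ => rfl⟩
  have hTbdd : BddAbove {k | ∃ c : Sym2 V → ℕ, IsMCColoring G c ∧ (c '' G.edgeSet).ncard = k} := by
    refine ⟨G.edgeSet.ncard, ?_⟩
    rintro x ⟨c, -, rfl⟩
    exact Set.ncard_image_le G.edgeSet.toFinite
  have hmem := Nat.sSup_mem hTne hTbdd
  obtain ⟨c, hc, hcard⟩ := hmem
  have hkey := key_bound G hG χ hcol c hc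
  have h1 : (c '' G.edgeSet).ncard = (G.edgeFinset.image c).card := by
    rw [← SimpleGraph.coe_edgeFinset, ← Finset.coe_image, Set.ncard_coe_finset]
  have h2 : G.edgeSet.ncard = G.edgeFinset.card := by
    rw [← SimpleGraph.coe_edgeFinset, Set.ncard_coe_finset]
  have hfinal : mcNumber G + Fintype.card V ≤ G.edgeSet.ncard + χ := by
    unfold mcNumber
    rw [← hcard, h1, h2]
    exact hkey
  omega
end

section
/- Let G be a connected graph with n vertices and m edges, and let k be a positive integer. If G is not k-connected, then mc(G) ≤ m - n + k. -/
namespace MCAux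

variable {V : Type*} {G : SimpleGraph V} {c : Sym2 V → ℕ}

/-- Monochromatic connectedness in color `i`. -/
def MRel (G : SimpleGraph V) (c : Sym2 V → ℕ) (i : ℕ) (u v : V) : Prop :=
  ∃ p : G.Walk u v, ∀ e ∈ p.edges, c e = i

lemma mrel_refl (i : ℕ) (v : V) : MRel G c i v v :=
  ⟨SimpleGraph.Walk.nil, by simp⟩

lemma mrel_symm {i : ℕ} {u v : V} (h : MRel G c i u v) : MRel G c i v u := by
  obtain ⟨p, hp⟩ := h
  refine ⟨p.reverse, fun e he => hp e ?_⟩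
  simpa [SimpleGraph.Walk.edges_reverse] using he

lemma mrel_trans {i : ℕ} {u v w : V} (h1 : MRel G c i u v) (h2 : MRel G c i v w) :
    MRel G c i u w := by
  obtain ⟨p, hp⟩ := h1
  obtain ⟨q, hq⟩ := h2
  refine ⟨p.append q, fun e he => ?_⟩
  rw [SimpleGraph.Walk.edges_append, List.mem_append] at he
  rcases he with he | he
  · exact hp e he
  · exact hq e he

/-- Minimal length of a monochromatic walk of color `i` from `v` to `t`. -/
noncomputable def mdist (G : SimpleGraph V) (c : Sym2 V → ℕ) (i : ℕ) (t v : V) : ℕ :=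
  sInf {n | ∃ p : G.Walk v t, (∀ e ∈ p.edges, c e = i) ∧ p.length = n}

lemma step {i : ℕ} {t v : V} (hv : v ≠ t) (h : MRel G c i v t) :
    ∃ u : V, G.Adj v u ∧ c s(v, u) = i ∧ MRel G c i u t ∧
      mdist G c i t u < mdist G c i t v := by
  obtain ⟨p, hp⟩ := h
  have hne : {n | ∃ p : G.Walk v t, (∀ e ∈ p.edges, c e = i) ∧ p.length = n}.Nonempty :=
    ⟨p.length, p, hp, rfl⟩
  obtain ⟨q, hq, hqlen⟩ := Nat.sInf_mem hne
  cases q with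
  | nil => exact absurd rfl hv
  | @cons _ u _ hadj q' =>
    refine ⟨u, hadj, hq _ (by simp), ⟨q', fun e he => hq _ (by simp [he])⟩, ?_⟩
    have h1 : mdist G c i t u ≤ q'.length :=
      Nat.sInf_le ⟨q', fun e he => hq _ (by simp [he]), rfl⟩
    have h2 : mdist G c i t v = q'.length + 1 := by
      have := hqlen
      rw [SimpleGraph.Walk.length_cons] at this
      unfold mdist
      omega
    omega

open Classical in
/-- The "first edge towards `t`" function. -/
noncomputable def gfun (G : SimpleGraph V) (c : Sym2 V → ℕ) (i : ℕ) (t v : V) : Sym2 V :=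
  if h : v ≠ t ∧ MRel G c i v t then s(v, Classical.choose (step h.1 h.2)) else s(v, v)

lemma gfun_spec {i : ℕ} {t v : V} (h1 : v ≠ t) (h2 : MRel G c i v t) :
    ∃ u, gfun G c i t v = s(v, u) ∧ G.Adj v u ∧ c s(v, u) = i ∧ MRel G c i u t ∧
      mdist G c i t u < mdist G c i t v := by
  have h : v ≠ t ∧ MRel G c i v t := ⟨h1, h2⟩
  refine ⟨Classical.choose (step h.1 h.2), ?_, Classical.choose_spec (step h.1 h.2)⟩
  simp [gfun, h]

lemma gfun_injOn {i : ℕ} {t : V} :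
    Set.InjOn (gfun G c i t) {v | v ≠ t ∧ MRel G c i v t} := by
  rintro v ⟨hv1, hv2⟩ w ⟨hw1, hw2⟩ heq
  by_contra hne
  obtain ⟨u, hgu, _, _, _, hd⟩ := gfun_spec (G := G) (c := c) hv1 hv2
  obtain ⟨u', hgu', _, _, _, hd'⟩ := gfun_spec (G := G) (c := c) hw1 hw2
  rw [hgu, hgu'] at heq
  rcases Sym2.eq_iff.mp heq with ⟨h1, h2⟩ | ⟨h1, h2⟩
  · exact hne h1
  · subst h1; subst h2; omega

lemma gfun_mem_edgeSet {i : ℕ} {t v : V} (h1 : v ≠ t) (h2 : MRel G c i v t) :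
    gfun G c i t v ∈ G.edgeSet := by
  obtain ⟨u, hgu, hadj, _⟩ := gfun_spec (G := G) (c := c) h1 h2
  rw [hgu]; exact hadj

lemma gfun_color {i : ℕ} {t v : V} (h1 : v ≠ t) (h2 : MRel G c i v t) :
    c (gfun G c i t v) = i := by
  obtain ⟨u, hgu, _, hcol, _⟩ := gfun_spec (G := G) (c := c) h1 h2
  rw [hgu]; exact hcol

lemma gfun_vert_mrel {i : ℕ} {t v : V} (h1 : v ≠ t) (h2 : MRel G c i v t)
    {w : V} (hw : w ∈ gfun G c i t v) : MRel G c i w t := by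
  obtain ⟨u, hgu, _, _, hu, _⟩ := gfun_spec (G := G) (c := c) h1 h2
  rw [hgu] at hw
  rcases Sym2.mem_iff.mp hw with h | h
  · subst h; exact h2
  · subst h; exact hu

lemma main {V : Type*} [Fintype V] (G : SimpleGraph V) (c : Sym2 V → ℕ)
    (hc : IsMCColoring G c) (S : Set V) (x y : V) (hx : x ∈ Sᶜ) (hy : y ∈ Sᶜ)
    (hxy : ¬ (G.induce Sᶜ).Reachable ⟨x, hx⟩ ⟨y, hy⟩) :
    (c '' G.edgeSet).ncard + Sᶜ.ncard ≤ G.edgeSet.ncard + 1 := by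
  classical
  set A : Set V := {v | ∃ h : v ∈ Sᶜ, (G.induce Sᶜ).Reachable ⟨x, hx⟩ ⟨v, h⟩} with hA
  set B : Set V := Sᶜ \ A with hB
  have hAS : A ⊆ Sᶜ := fun v hv => hv.1
  have hxA : x ∈ A := ⟨hx, SimpleGraph.Reachable.refl _⟩
  have hyB : y ∈ B := ⟨hy, fun h => hxy h.2⟩
  have hxy' : x ≠ y := fun h => hyB.2 (h ▸ hxA)
  have hABdisj : ∀ v, v ∈ A → v ∈ B → False := fun v h1 h2 => h2.2 h1
  have hSc : ∀ v, v ∈ Sᶜ → v ∈ A ∨ v ∈ B := by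
    intro v hv
    by_cases h : v ∈ A
    · exact Or.inl h
    · exact Or.inr ⟨hv, h⟩
  -- adjacency closure of A within Sᶜ
  have hadjA : ∀ a ∈ A, ∀ u, G.Adj a u → u ∈ Sᶜ → u ∈ A := by
    rintro a ⟨haS, har⟩ u hadj huS
    refine ⟨huS, har.trans (SimpleGraph.Adj.reachable ?_)⟩
    simpa using hadj
  have hnadj : ∀ a ∈ A, ∀ b ∈ B, ¬ G.Adj a b := by
    intro a ha b hb hadj
    exact hABdisj b (hadjA a ha b hadj hb.1) hb
  -- crossing lemma
  have hcross : ∀ {a b : V} (p : G.Walk a b), a ∈ A → b ∈ B → ∃ z ∈ p.support, z ∈ S := by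
    intro a b p
    induction p with
    | nil => intro ha hb; exact absurd ha hb.2
    | @cons a u b hadj q ih =>
      intro ha hb
      by_cases huS : u ∈ S
      · refine ⟨u, ?_, huS⟩
        rw [SimpleGraph.Walk.support_cons]
        exact List.mem_cons_of_mem _ q.start_mem_support
      · obtain ⟨z, hz, hzS⟩ := ih (hadjA a ha u hadj huS) hb
        refine ⟨z, ?_, hzS⟩
        rw [SimpleGraph.Walk.support_cons]
        exact List.mem_cons_of_mem _ hz
  have hcrossMR : ∀ (i : ℕ) {a b : V}, a ∈ A → b ∈ B → MRel G c i a b →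
      ∃ z, z ∈ S ∧ MRel G c i z b := by
    rintro i a b ha hb ⟨p, hp⟩
    obtain ⟨z, hz, hzS⟩ := hcross p ha hb
    exact ⟨z, hzS, ⟨p.dropUntil z hz,
      fun e he => hp e (SimpleGraph.Walk.edges_dropUntil_subset p hz he)⟩⟩
  have hcrossMR' : ∀ (i : ℕ) {a b : V}, a ∈ A → b ∈ B → MRel G c i b a →
      ∃ z, z ∈ S ∧ MRel G c i z a := by
    rintro i a b ha hb ⟨p, hp⟩
    have hrev : ∃ z ∈ p.support, z ∈ S := by
      obtain ⟨z, hz, hzS⟩ := hcross p.reverse ha hb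
      refine ⟨z, ?_, hzS⟩
      rwa [SimpleGraph.Walk.support_reverse, List.mem_reverse] at hz
    obtain ⟨z, hz, hzS⟩ := hrev
    exact ⟨z, hzS, ⟨p.dropUntil z hz,
      fun e he => hp e (SimpleGraph.Walk.edges_dropUntil_subset p hz he)⟩⟩
  -- assigned colors
  have hall : ∀ v : V, ∃ i : ℕ, (v ∈ A → MRel G c i v y) ∧ (v ∉ A → MRel G c i v x) := by
    intro v
    by_cases hvA : v ∈ A
    · obtain ⟨p, _, j, hj⟩ := hc v y
      exact ⟨j, fun _ => ⟨p, hj⟩, fun h => absurd hvA h⟩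
    · obtain ⟨p, _, j, hj⟩ := hc v x
      exact ⟨j, fun h => absurd h hvA, fun _ => ⟨p, hj⟩⟩
  choose iv hivA hivB using hall
  set W : Set V := Sᶜ \ {x} with hW
  obtain ⟨f, hfA, hfB⟩ : ∃ f : V → Sym2 V,
      (∀ v, v ∈ A → f v = gfun G c (iv v) y v) ∧
      (∀ v, v ∉ A → f v = gfun G c (iv v) x v) := by
    refine ⟨fun v => if v ∈ A then gfun G c (iv v) y v else gfun G c (iv v) x v, ?_, ?_⟩
    · intro v hv; simp [hv]
    · intro v hv; simp [hv]
  have hWmem : ∀ v ∈ W, v ∈ Sᶜ ∧ v ≠ x := fun v hv => ⟨hv.1, hv.2⟩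
  -- basic spec of f on W
  have hfspec : ∀ v ∈ W, f v ∈ G.edgeSet ∧ c (f v) = iv v ∧
      ∃ u, f v = s(v, u) ∧ G.Adj v u := by
    intro v hv
    obtain ⟨hvS, hvx⟩ := hWmem v hv
    by_cases hvA : v ∈ A
    · have hne : v ≠ y := fun h => hABdisj v hvA (h ▸ hyB)
      have hR := hivA v hvA
      rw [hfA v hvA]
      obtain ⟨u, hgu, hadj, hcol, _⟩ := gfun_spec hne hR
      exact ⟨gfun_mem_edgeSet hne hR, gfun_color hne hR, u, hgu, hadj⟩
    · have hR := hivB v hvA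
      rw [hfB v hvA]
      obtain ⟨u, hgu, hadj, hcol, _⟩ := gfun_spec hvx hR
      exact ⟨gfun_mem_edgeSet hvx hR, gfun_color hvx hR, u, hgu, hadj⟩
  -- injectivity of f on W
  have hfinj : Set.InjOn f W := by
    intro v hv w hw heq
    by_contra hne
    obtain ⟨hvS, hvx⟩ := hWmem v hv
    obtain ⟨hwS, hwx⟩ := hWmem w hw
    have hciv : iv v = iv w := by
      have h1 := (hfspec v hv).2.1
      have h2 := (hfspec w hw).2.1
      rw [← h1, ← h2, heq]
    -- adjacency between v and w via edge equality
    obtain ⟨u1, hu1, hadj1⟩ := (hfspec v hv).2.2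
    obtain ⟨u2, hu2, hadj2⟩ := (hfspec w hw).2.2
    have hedge : s(v, u1) = s(w, u2) := by rw [← hu1, ← hu2, heq]
    have hvw : u1 = w ∧ u2 = v := by
      rcases Sym2.eq_iff.mp hedge with ⟨h1, h2⟩ | ⟨h1, h2⟩
      · exact absurd h1 hne
      · exact ⟨h2, h1.symm⟩
    have hadjvw : G.Adj v w := hvw.1 ▸ hadj1
    by_cases hvA : v ∈ A <;> by_cases hwA : w ∈ A
    · -- both in A : gfun injectivity with target y
      have hvny : v ≠ y := fun h => hABdisj v hvA (h ▸ hyB)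
      have hwny : w ≠ y := fun h => hABdisj w hwA (h ▸ hyB)
      apply hne
      apply gfun_injOn (G := G) (c := c) (i := iv v) (t := y)
        ⟨hvny, hivA v hvA⟩ ⟨hwny, hciv ▸ hivA w hwA⟩
      rw [← hfA v hvA]
      rw [show gfun G c (iv v) y w = gfun G c (iv w) y w by rw [hciv]]
      rw [← hfA w hwA]
      exact heq
    · exact hnadj v hvA w ⟨hwS, hwA⟩ hadjvw
    · exact hnadj w hwA v ⟨hvS, hvA⟩ hadjvw.symm
    · apply hne
      apply gfun_injOn (G := G) (c := c) (i := iv v) (t := x)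
        ⟨hvx, hivB v hvA⟩ ⟨hwx, hciv ▸ hivB w hwA⟩
      rw [← hfB v hvA]
      rw [show gfun G c (iv v) x w = gfun G c (iv w) x w by rw [hciv]]
      rw [← hfB w hwA]
      exact heq
  -- per-color: D-sets inject into color classes
  have hDle : ∀ (i : ℕ) (t : V),
      ({v | v ≠ t ∧ MRel G c i v t}).ncard ≤ ({e | e ∈ G.edgeSet ∧ c e = i}).ncard := by
    intro i t
    have himg : gfun G c i t '' {v | v ≠ t ∧ MRel G c i v t} ⊆
        {e | e ∈ G.edgeSet ∧ c e = i} := by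
      rintro e ⟨v, ⟨hv1, hv2⟩, rfl⟩
      exact ⟨gfun_mem_edgeSet hv1 hv2, gfun_color hv1 hv2⟩
    calc ({v | v ≠ t ∧ MRel G c i v t}).ncard
        = (gfun G c i t '' {v | v ≠ t ∧ MRel G c i v t}).ncard :=
          (Set.ncard_image_of_injOn gfun_injOn).symm
      _ ≤ _ := Set.ncard_le_ncard himg (Set.toFinite _)
  -- key per-color inequality
  have hkey : ∀ i : ℕ, ({e | e ∈ G.edgeSet ∧ c e = i}).Nonempty →
      ({v | v ∈ W ∧ iv v = i}).ncard + 1 ≤ ({e | e ∈ G.edgeSet ∧ c e = i}).ncard := by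
    intro i hEi
    set X : Set V := {v | v ∈ W ∧ iv v = i} with hXdef
    have hXW : X ⊆ W := fun v hv => hv.1
    have hXS : X ⊆ Sᶜ := fun v hv => hv.1.1
    have hXx : x ∉ X := fun h => h.1.2 rfl
    have hXA : ∀ v ∈ X, v ∈ A → MRel G c i v y ∧ v ≠ y := by
      intro v hv hvA
      exact ⟨hv.2 ▸ hivA v hvA, fun h => hABdisj v hvA (h ▸ hyB)⟩
    have hXB : ∀ v ∈ X, v ∉ A → MRel G c i v x ∧ v ≠ x := by
      intro v hv hvA
      exact ⟨hv.2 ▸ hivB v hvA, hv.1.2⟩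
    by_cases hR : MRel G c i x y
    · obtain ⟨z, hzS, hzR⟩ := hcrossMR i hxA hyB hR
      have hzy : z ≠ y := fun h => hy (h ▸ hzS)
      have hφD : ∀ v ∈ insert x X, (if v = y then z else v) ∈
          {v | v ≠ y ∧ MRel G c i v y} := by
        intro v hv
        by_cases hvy : v = y
        · simp only [if_pos hvy]; exact ⟨hzy, hzR⟩
        · simp only [if_neg hvy]
          rcases hv with rfl | hvX
          · exact ⟨hvy, hR⟩
          · by_cases hvA : v ∈ A
            · exact ⟨hvy, (hXA v hvX hvA).1⟩
            · exact ⟨hvy, mrel_trans (hXB v hvX hvA).1 hR⟩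
      have hmemS : ∀ u ∈ insert x X, u ∈ Sᶜ := by
        intro u hu
        rcases hu with rfl | hu
        · exact hx
        · exact hXS hu
      have hφinj : Set.InjOn (fun v => if v = y then z else v) (insert x X) := by
        intro v hv w hw heq
        simp only at heq
        by_cases hvy : v = y <;> by_cases hwy : w = y
        · rw [hvy, hwy]
        · exfalso; apply hmemS w hw
          simp only [if_pos hvy, if_neg hwy] at heq
          rw [← heq]; exact hzS
        · exfalso; apply hmemS v hv
          simp only [if_neg hvy, if_pos hwy] at heq
          rw [heq]; exact hzS
        · simpa only [if_neg hvy, if_neg hwy] using heq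
      calc X.ncard + 1 = (insert x X).ncard :=
            (Set.ncard_insert_of_notMem hXx (Set.toFinite _)).symm
        _ = ((fun v => if v = y then z else v) '' insert x X).ncard :=
            (Set.ncard_image_of_injOn hφinj).symm
        _ ≤ ({v | v ≠ y ∧ MRel G c i v y}).ncard :=
            Set.ncard_le_ncard (by rintro _ ⟨v, hv, rfl⟩; exact hφD v hv) (Set.toFinite _)
        _ ≤ _ := hDle i y
    · have hcardX : X.ncard = (X ∩ A).ncard + (X \ A).ncard := by
        rw [← Set.ncard_union_eq (Set.disjoint_left.mpr (fun v hv1 hv2 => hv2.2 hv1.2))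
          (Set.toFinite _) (Set.toFinite _)]
        congr 1
        ext v
        constructor
        · intro hv
          by_cases hvA : v ∈ A
          · exact Or.inl ⟨hv, hvA⟩
          · exact Or.inr ⟨hv, hvA⟩
        · rintro (⟨hv, _⟩ | ⟨hv, _⟩) <;> exact hv
      by_cases hAXe : (X ∩ A).Nonempty <;> by_cases hBXe : (X \ A).Nonempty
      · -- both sides used: two disjoint injections
        obtain ⟨a, haX, haA⟩ := hAXe
        obtain ⟨b, hbX, hbA⟩ := hBXe
        obtain ⟨z1, hz1S, hz1R⟩ := hcrossMR i haA hyB (hXA a haX haA).1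
        obtain ⟨z2, hz2S, hz2R⟩ := hcrossMR' i hxA ⟨hXS hbX, hbA⟩ (hXB b hbX hbA).1
        have hT1 : insert z1 (X ∩ A) ⊆ {v | v ≠ y ∧ MRel G c i v y} := by
          rintro v (rfl | ⟨hvX, hvA⟩)
          · exact ⟨fun h => hy (h ▸ hz1S), hz1R⟩
          · exact ⟨(hXA v hvX hvA).2, (hXA v hvX hvA).1⟩
        have hT2 : insert z2 (X \ A) ⊆ {v | v ≠ x ∧ MRel G c i v x} := by
          rintro v (rfl | ⟨hvX, hvA⟩)
          · exact ⟨fun h => hx (h ▸ hz2S), hz2R⟩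
          · exact ⟨(hXB v hvX hvA).2, (hXB v hvX hvA).1⟩
        have hI1sub : gfun G c i y '' insert z1 (X ∩ A) ⊆ {e | e ∈ G.edgeSet ∧ c e = i} := by
          rintro _ ⟨v, hv, rfl⟩
          obtain ⟨h1, h2⟩ := hT1 hv
          exact ⟨gfun_mem_edgeSet h1 h2, gfun_color h1 h2⟩
        have hI2sub : gfun G c i x '' insert z2 (X \ A) ⊆ {e | e ∈ G.edgeSet ∧ c e = i} := by
          rintro _ ⟨v, hv, rfl⟩
          obtain ⟨h1, h2⟩ := hT2 hv
          exact ⟨gfun_mem_edgeSet h1 h2, gfun_color h1 h2⟩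
        have hdisj : Disjoint (gfun G c i y '' insert z1 (X ∩ A))
            (gfun G c i x '' insert z2 (X \ A)) := by
          rw [Set.disjoint_left]
          rintro _ ⟨v, hv, rfl⟩ ⟨w, hw, hew⟩
          obtain ⟨hv1, hv2⟩ := hT1 hv
          obtain ⟨hw1, hw2⟩ := hT2 hw
          obtain ⟨u, hgu, _, _, _, _⟩ := gfun_spec hv1 hv2
          have hvmem : v ∈ gfun G c i x w := by
            rw [hew, hgu]; exact Sym2.mem_mk_left v u
          have hvx : MRel G c i v x := gfun_vert_mrel hw1 hw2 hvmem
          exact hR (mrel_trans (mrel_symm hvx) hv2)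
        have hz1n : z1 ∉ X ∩ A := fun h => (hXS h.1) hz1S
        have hz2n : z2 ∉ X \ A := fun h => (hXS h.1) hz2S
        have hc1 : (gfun G c i y '' insert z1 (X ∩ A)).ncard = (X ∩ A).ncard + 1 := by
          rw [Set.ncard_image_of_injOn (gfun_injOn.mono hT1),
            Set.ncard_insert_of_notMem hz1n (Set.toFinite _)]
        have hc2 : (gfun G c i x '' insert z2 (X \ A)).ncard = (X \ A).ncard + 1 := by
          rw [Set.ncard_image_of_injOn (gfun_injOn.mono hT2),
            Set.ncard_insert_of_notMem hz2n (Set.toFinite _)]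
        have hunion : (gfun G c i y '' insert z1 (X ∩ A)).ncard +
            (gfun G c i x '' insert z2 (X \ A)).ncard ≤
            ({e | e ∈ G.edgeSet ∧ c e = i}).ncard := by
          rw [← Set.ncard_union_eq hdisj (Set.toFinite _) (Set.toFinite _)]
          exact Set.ncard_le_ncard (Set.union_subset hI1sub hI2sub) (Set.toFinite _)
        omega
      · -- only A-side
        have hXAeq : ∀ v ∈ X, v ∈ A := by
          intro v hv
          by_contra hvA
          exact hBXe ⟨v, hv, hvA⟩
        obtain ⟨a, haX, haA⟩ := hAXe
        obtain ⟨z, hzS, hzR⟩ := hcrossMR i haA hyB (hXA a haX haA).1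
        have hT : insert z X ⊆ {v | v ≠ y ∧ MRel G c i v y} := by
          rintro v (rfl | hvX)
          · exact ⟨fun h => hy (h ▸ hzS), hzR⟩
          · exact ⟨(hXA v hvX (hXAeq v hvX)).2, (hXA v hvX (hXAeq v hvX)).1⟩
        have hzn : z ∉ X := fun h => (hXS h) hzS
        calc X.ncard + 1 = (insert z X).ncard :=
              (Set.ncard_insert_of_notMem hzn (Set.toFinite _)).symm
          _ ≤ ({v | v ≠ y ∧ MRel G c i v y}).ncard := Set.ncard_le_ncard hT (Set.toFinite _)
          _ ≤ _ := hDle i y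
      · -- only B-side
        have hXBeq : ∀ v ∈ X, v ∉ A := by
          intro v hv hvA
          exact hAXe ⟨v, hv, hvA⟩
        obtain ⟨b, hbX, hbA⟩ := hBXe
        obtain ⟨z, hzS, hzR⟩ := hcrossMR' i hxA ⟨hXS hbX, hbA⟩ (hXB b hbX hbA).1
        have hT : insert z X ⊆ {v | v ≠ x ∧ MRel G c i v x} := by
          rintro v (rfl | hvX)
          · exact ⟨fun h => hx (h ▸ hzS), hzR⟩
          · exact ⟨(hXB v hvX (hXBeq v hvX)).2, (hXB v hvX (hXBeq v hvX)).1⟩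
        have hzn : z ∉ X := fun h => (hXS h) hzS
        calc X.ncard + 1 = (insert z X).ncard :=
              (Set.ncard_insert_of_notMem hzn (Set.toFinite _)).symm
          _ ≤ ({v | v ≠ x ∧ MRel G c i v x}).ncard := Set.ncard_le_ncard hT (Set.toFinite _)
          _ ≤ _ := hDle i x
      · -- X empty
        have hX0 : X.ncard = 0 := by
          have : X = ∅ := by
            ext v
            simp only [Set.mem_empty_iff_false, iff_false]
            intro hv
            by_cases hvA : v ∈ A
            · exact hAXe ⟨v, hv, hvA⟩
            · exact hBXe ⟨v, hv, hvA⟩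
          rw [this, Set.ncard_empty]
        have := (Set.ncard_pos (Set.toFinite _)).mpr hEi
        omega
  -- every used color appears outside f '' W
  have hmiss : ∀ e ∈ G.edgeSet, ∃ e', (e' ∈ G.edgeSet ∧ c e' = c e) ∧ e' ∉ f '' W := by
    intro e he
    by_contra hcon
    push_neg at hcon
    have hEiX : {e' | e' ∈ G.edgeSet ∧ c e' = c e} ⊆ f '' {v | v ∈ W ∧ iv v = c e} := by
      intro e' he'
      obtain ⟨v, hvW, hfv⟩ := hcon e' he'
      refine ⟨v, ⟨hvW, ?_⟩, hfv⟩
      rw [← (hfspec v hvW).2.1, hfv, he'.2]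
    have h1 := hkey (c e) ⟨e, he, rfl⟩
    have h2 : ({e' | e' ∈ G.edgeSet ∧ c e' = c e}).ncard ≤
        ({v | v ∈ W ∧ iv v = c e}).ncard :=
      le_trans (Set.ncard_le_ncard hEiX (Set.toFinite _)) (Set.ncard_image_le (Set.toFinite _))
    omega
  have hsub : c '' G.edgeSet ⊆ c '' (G.edgeSet \ f '' W) := by
    rintro j ⟨e, he, rfl⟩
    obtain ⟨e', ⟨he', hce'⟩, hnot⟩ := hmiss e he
    exact ⟨e', ⟨he', hnot⟩, hce'⟩
  have hfWE : f '' W ⊆ G.edgeSet := by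
    rintro _ ⟨v, hv, rfl⟩
    exact (hfspec v hv).1
  have h3 : (c '' G.edgeSet).ncard ≤ (G.edgeSet \ f '' W).ncard :=
    le_trans (Set.ncard_le_ncard hsub (Set.toFinite _)) (Set.ncard_image_le (Set.toFinite _))
  have h4 : (G.edgeSet \ f '' W).ncard + (f '' W).ncard = G.edgeSet.ncard :=
    Set.ncard_diff_add_ncard_of_subset hfWE (Set.toFinite _)
  have h5 : (f '' W).ncard = W.ncard := Set.ncard_image_of_injOn hfinj
  have h6 : W.ncard + 1 = Sᶜ.ncard := Set.ncard_diff_singleton_add_one hx (Set.toFinite _)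
  omega

end MCAux

/-- If a connected graph `G` with `n` vertices and `m` edges is not
`k`-connected, then `mc(G) ≤ m - n + k`. -/
theorem stmt_18 {V : Type*} [Fintype V] (G : SimpleGraph V) (hG : G.Connected)
    (k : ℕ) (hk : 0 < k)
    (hnc : ¬ (k < Fintype.card V ∧
      ∀ s : Set V, s.ncard < k → (G.induce (sᶜ : Set V)).Connected)) :
    (mcNumber G : ℤ) ≤ (G.edgeSet.ncard : ℤ) - Fintype.card V + k := by
  classical
  set Sset : Set ℕ :=
    {j | ∃ c : Sym2 V → ℕ, IsMCColoring G c ∧ (c '' G.edgeSet).ncard = j} with hSset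
  have hne : Sset.Nonempty := by
    refine ⟨(((fun _ => 0) : Sym2 V → ℕ) '' G.edgeSet).ncard, (fun _ => 0), ?_, rfl⟩
    intro u v
    obtain ⟨w⟩ := hG.preconnected u v
    exact ⟨w.toPath.1, w.toPath.2, 0, fun e _ => rfl⟩
  have hbdd : ∀ j ∈ Sset, j ≤ G.edgeSet.ncard := by
    rintro j ⟨c, _, rfl⟩
    exact Set.ncard_image_le (Set.toFinite _)
  have hmceq : mcNumber G = sSup Sset := rfl
  have hmem : mcNumber G ∈ Sset := by
    rw [hmceq]
    exact Nat.sSup_mem hne ⟨G.edgeSet.ncard, fun j hj => hbdd j hj⟩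
  obtain ⟨c, hc, hcn⟩ := hmem
  by_cases hcard : k < Fintype.card V
  · push_neg at hnc
    obtain ⟨S, hSk, hScon⟩ := hnc hcard
    have hScene : (Sᶜ : Set V).Nonempty := by
      by_contra h
      rw [Set.not_nonempty_iff_eq_empty, Set.compl_empty_iff] at h
      rw [h, Set.ncard_univ, Nat.card_eq_fintype_card] at hSk
      omega
    have hNE : Nonempty ↥(Sᶜ : Set V) := hScene.to_subtype
    rw [SimpleGraph.connected_iff] at hScon
    push_neg at hScon
    have hnp : ¬ (G.induce (Sᶜ : Set V)).Preconnected := fun h => (hScon h).false hNE.some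
    simp only [SimpleGraph.Preconnected, not_forall] at hnp
    obtain ⟨⟨x, hxm⟩, ⟨y, hym⟩, hxy⟩ := hnp
    have hmain := MCAux.main G c hc S x y hxm hym hxy
    rw [hcn] at hmain
    have hcompl : S.ncard + (Sᶜ : Set V).ncard = Fintype.card V := by
      rw [Set.ncard_add_ncard_compl, Nat.card_eq_fintype_card]
    omega
  · push_neg at hcard
    have h1 : mcNumber G ≤ G.edgeSet.ncard := by
      rw [← hcn]
      exact Set.ncard_image_le (Set.toFinite _)
    omega
end
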